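/- arXiv:2310.06357 — 7 statements merged into one kernel-verified Lean document; each statement's English description precedes it below -/
import Mathlib

section
/- Let p_1,…,p_n be p-values with true-null set N of size n₀ ≥ 1, such that for every i ∈ N, p_i is uniformly distributed on (0,1) and independent of (p_j)_{j≠i}. Let λ̂ be a stopping time taking values in [q,1] with respect to the filtration G_t, and for an index i ∈ N define the leave-one-out estimator π̂₀^{λ̂,−i} = inf{π̂₀^{λ̂}(p') : p'_{−i} = p_{−i}, p'_i < q}, where π̂₀^{λ̂}(p') denotes the adaptive Storey estimator computed from the p-value vector p'. Then E[1/π̂₀^{λ̂,−i}] ≤ n/n₀. -/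
set_option autoImplicit false

open MeasureTheory ProbabilityTheory

attribute [local instance] Classical.propDecidable

/-- Number of coordinates of the p-value vector `u` that are at least `s`. -/
noncomputable def hiCountV (n : ℕ) (u : Fin n → ℝ) (s : ℝ) : ℕ :=
  (Finset.univ.filter fun i => s ≤ u i).card

/-- Storey's null proportion estimator, as a function of the p-value vector. -/
noncomputable def storeyPi0V (n : ℕ) (lam : ℝ) (u : Fin n → ℝ) : ℝ :=
  (1 + (hiCountV n u lam : ℝ)) / (n * (1 - lam))

/-- The filtration `G_t = σ(Σ 1{p_i ≥ s} : q ≤ s ≤ t)` on the canonical space of p-value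
vectors. -/
noncomputable def storeyFiltV (n : ℕ) (q t : ℝ) : MeasurableSpace (Fin n → ℝ) :=
  ⨆ s ∈ Set.Icc q t, MeasurableSpace.comap (fun u => hiCountV n u s) ⊤

/-- The leave-one-out adaptive Storey estimator
`π̂₀^{λ̂,-i}(u) = inf{π̂₀^{λ̂(u')}(u') : u'_{-i} = u_{-i}, u'_i < q}`. -/
noncomputable def pi0LOO (n : ℕ) (q : ℝ) (lamHat : (Fin n → ℝ) → ℝ)
    (i : Fin n) (u : Fin n → ℝ) : ℝ :=
  sInf {x : ℝ | ∃ u' : Fin n → ℝ,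
    (∀ j, j ≠ i → u' j = u j) ∧ u' i < q ∧ x = storeyPi0V n (lamHat u') u'}


set_option linter.unusedVariables false
set_option linter.unusedSectionVars false
set_option maxHeartbeats 1000000

-- joint measurability of hiCount
lemma meas_hiCountV_joint (n : ℕ) :
    Measurable fun x : (Fin n → ℝ) × ℝ => hiCountV n x.1 x.2 := by
  have : (fun x : (Fin n → ℝ) × ℝ => hiCountV n x.1 x.2)
      = fun x => ∑ j : Fin n, if x.2 ≤ x.1 j then 1 else 0 := by
    funext x; rw [hiCountV, Finset.card_filter]
  rw [this]
  refine Finset.measurable_sum _ (fun j _ => ?_)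
  refine Measurable.ite ?_ measurable_const measurable_const
  exact measurableSet_le measurable_snd ((measurable_pi_apply j).comp measurable_fst)

lemma meas_hiCountV (n : ℕ) (s : ℝ) : Measurable fun u : Fin n → ℝ => hiCountV n u s :=
  (meas_hiCountV_joint n).comp (measurable_id.prodMk measurable_const)

lemma storeyFiltV_le (n : ℕ) (q t : ℝ) : storeyFiltV n q t ≤ MeasurableSpace.pi := by
  refine iSup_le fun s => iSup_le fun _ => ?_
  exact (meas_hiCountV n s).comap_le

/-- Determination: sets in `G_t` are determined by the counts on `[q,t]`. -/
lemma det_of_filt (n : ℕ) (q t : ℝ) (S : Set (Fin n → ℝ))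
    (hS : MeasurableSet[storeyFiltV n q t] S) :
    ∀ u v : Fin n → ℝ, (∀ s ∈ Set.Icc q t, hiCountV n u s = hiCountV n v s) →
      (u ∈ S ↔ v ∈ S) := by
  let m : MeasurableSpace (Fin n → ℝ) :=
    { MeasurableSet' := fun S => ∀ u v : Fin n → ℝ,
        (∀ s ∈ Set.Icc q t, hiCountV n u s = hiCountV n v s) → (u ∈ S ↔ v ∈ S)
      measurableSet_empty := by intro u v _; simp
      measurableSet_compl := by
        intro S hS u v h
        simp only [Set.mem_compl_iff]
        exact not_congr (hS u v h)
      measurableSet_iUnion := by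
        intro f hf u v h
        simp only [Set.mem_iUnion]
        exact exists_congr fun k => hf k u v h }
  have hle : storeyFiltV n q t ≤ m := by
    refine iSup_le fun s => iSup_le fun hs => ?_
    rintro S ⟨A, -, rfl⟩
    intro u v h
    simp only [Set.mem_preimage, h s hs]
  exact hle S hS

section lam
variable (n : ℕ) (q : ℝ) (lamHat : (Fin n → ℝ) → ℝ)
  (hrange : ∀ u, lamHat u ∈ Set.Icc q 1)
  (hstop : ∀ t : ℝ, MeasurableSet[storeyFiltV n q t] {u | lamHat u ≤ t})

include hstop in
lemma lamHat_det : ∀ (t : ℝ) (u v : Fin n → ℝ),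
    (∀ s ∈ Set.Icc q t, hiCountV n u s = hiCountV n v s) →
    (lamHat u ≤ t ↔ lamHat v ≤ t) := fun t =>
  det_of_filt n q t _ (hstop t)

include hstop in
lemma lamHat_eq_of_agree (u v : Fin n → ℝ)
    (h : ∀ s, q ≤ s → hiCountV n u s = hiCountV n v s) : lamHat u = lamHat v := by
  have h1 := (lamHat_det n q lamHat hstop (lamHat u) u v
    (fun s hs => h s hs.1)).mp le_rfl
  have h2 := (lamHat_det n q lamHat hstop (lamHat v) v u
    (fun s hs => (h s hs.1).symm)).mp le_rfl
  exact le_antisymm h2 h1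

lemma hiCountV_agree_of_eq_off (i : Fin n) (u v : Fin n → ℝ)
    (hoff : ∀ j, j ≠ i → u j = v j) (hu : u i < q) (hv : v i < q) :
    ∀ s, q ≤ s → hiCountV n u s = hiCountV n v s := by
  intro s hs
  unfold hiCountV
  congr 1
  apply Finset.ext
  intro j
  simp only [Finset.mem_filter, Finset.mem_univ, true_and]
  rcases eq_or_ne j i with rfl | hj
  · constructor
    · intro h; exact absurd (lt_of_le_of_lt (hs.trans h) hu) (lt_irrefl _)
    · intro h; exact absurd (lt_of_le_of_lt (hs.trans h) hv) (lt_irrefl _)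
  · rw [hoff j hj]

include hrange hstop in
lemma pi0LOO_eq (hq0 : 0 < q) (i : Fin n) (u : Fin n → ℝ) :
    pi0LOO n q lamHat i u
      = storeyPi0V n (lamHat (Function.update u i (q/2))) (Function.update u i (q/2)) := by
  set w := Function.update u i (q/2) with hw
  have hwi : w i < q := by
    rw [hw, Function.update_self]; linarith
  have hwoff : ∀ j, j ≠ i → w j = u j := fun j hj => Function.update_of_ne hj _ _
  have hset : {x : ℝ | ∃ u' : Fin n → ℝ,
      (∀ j, j ≠ i → u' j = u j) ∧ u' i < q ∧ x = storeyPi0V n (lamHat u') u'}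
      = {storeyPi0V n (lamHat w) w} := by
    apply Set.eq_singleton_iff_unique_mem.mpr
    constructor
    · exact ⟨w, hwoff, hwi, rfl⟩
    · rintro x ⟨u', hoff, hui, rfl⟩
      have hagree : ∀ s, q ≤ s → hiCountV n u' s = hiCountV n w s := by
        intro s hs
        exact hiCountV_agree_of_eq_off n q i u' w
          (fun j hj => (hoff j hj).trans (hwoff j hj).symm) hui hwi s hs
      have hlam : lamHat u' = lamHat w :=
        lamHat_eq_of_agree n q lamHat hstop u' w hagree
      have hq' : q ≤ lamHat w := (hrange w).1
      unfold storeyPi0V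
      rw [hlam, hagree (lamHat w) hq']
  rw [pi0LOO, hset, csInf_singleton]

end lam

/-- counts are invariant under permutations of coordinates -/
lemma hiCountV_comp_perm (n : ℕ) (σ : Equiv.Perm (Fin n)) (u : Fin n → ℝ) (s : ℝ) :
    hiCountV n (u ∘ σ) s = hiCountV n u s := by
  unfold hiCountV
  apply Finset.card_nbij (fun j => σ j)
  · intro j hj
    simp only [Finset.mem_filter, Finset.mem_univ, true_and, Function.comp_apply] at hj ⊢
    simpa using hj
  · intro a _ b _ hab; exact σ.injective hab
  · intro j hj
    simp only [Finset.coe_filter, Set.mem_setOf_eq, Finset.mem_univ, true_and,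
      Set.mem_image, Function.comp_apply] at hj ⊢
    exact ⟨σ.symm j, by simpa using hj, by simp⟩

/-- key count identity : replacing coordinate `k` (with `u k ≥ s ≥ q`) by `q/2` decreases
the count by one. -/
lemma hiCountV_update (n : ℕ) (q : ℝ) (hq0 : 0 < q) (k : Fin n) (u : Fin n → ℝ)
    (s : ℝ) (hs : q ≤ s) (hks : s ≤ u k) :
    hiCountV n (Function.update u k (q/2)) s + 1 = hiCountV n u s := by
  unfold hiCountV
  have hins : (Finset.univ.filter fun j => s ≤ Function.update u k (q/2) j)
      = (Finset.univ.filter fun j => s ≤ u j).erase k := by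
    apply Finset.ext
    intro j
    simp only [Finset.mem_filter, Finset.mem_univ, true_and, Finset.mem_erase]
    rcases eq_or_ne j k with rfl | hj
    · simp only [Function.update_self]
      constructor
      · intro h; linarith
      · rintro ⟨h, -⟩; exact absurd rfl h
    · rw [Function.update_of_ne hj]
      exact ⟨fun h => ⟨hj, h⟩, fun h => h.2⟩
  rw [hins, Finset.card_erase_of_mem (by simp [hks]), Nat.sub_add_cancel]
  exact Finset.card_pos.mpr ⟨k, by simp [hks]⟩


noncomputable def GV (n : ℕ) (q : ℝ) (lamHat : (Fin n → ℝ) → ℝ) (k : Fin n)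
    (u : Fin n → ℝ) : ℝ :=
  ((n:ℝ) * (1 - lamHat (Function.update u k (q/2)))) /
    (1 + (hiCountV n (Function.update u k (q/2))
        (lamHat (Function.update u k (q/2))) : ℝ))

noncomputable def TermV (n : ℕ) (q : ℝ) (lamHat : (Fin n → ℝ) → ℝ) (k : Fin n)
    (u : Fin n → ℝ) : ℝ :=
  (if lamHat (Function.update u k (q/2)) ≤ u k then (1:ℝ) else 0) /
    (1 + (hiCountV n (Function.update u k (q/2))
        (lamHat (Function.update u k (q/2))) : ℝ))

section meas
variable (n : ℕ) (q : ℝ) (lamHat : (Fin n → ℝ) → ℝ)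
  (hstop : ∀ t : ℝ, MeasurableSet[storeyFiltV n q t] {u | lamHat u ≤ t})

include hstop in
lemma measurable_lamHat : Measurable lamHat := by
  apply measurable_of_Iic
  intro t
  exact storeyFiltV_le n q t _ (hstop t)

lemma measurable_updV (k : Fin n) :
    Measurable fun u : Fin n → ℝ => Function.update u k (q/2) := by
  apply measurable_pi_lambda
  intro j
  rcases eq_or_ne j k with rfl | hj
  · simp only [Function.update_self]; exact measurable_const
  · simp only [Function.update_of_ne hj]; exact measurable_pi_apply j

include hstop in
lemma measurable_GV (k : Fin n) : Measurable (GV n q lamHat k) := by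
  have h1 : Measurable fun u : Fin n → ℝ => Function.update u k (q/2) :=
    measurable_updV n q k
  have h2 : Measurable fun u : Fin n → ℝ => lamHat (Function.update u k (q/2)) :=
    (measurable_lamHat n q lamHat hstop).comp h1
  have h3 : Measurable fun u : Fin n → ℝ =>
      (hiCountV n (Function.update u k (q/2)) (lamHat (Function.update u k (q/2))) : ℝ) :=
    (measurable_from_top (f := fun m : ℕ => (m:ℝ))).comp
      ((meas_hiCountV_joint n).comp (h1.prodMk h2))
  exact (measurable_const.mul (measurable_const.sub h2)).div
    (measurable_const.add h3)

include hstop in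
lemma measurable_TermV (k : Fin n) : Measurable (TermV n q lamHat k) := by
  have h1 : Measurable fun u : Fin n → ℝ => Function.update u k (q/2) :=
    measurable_updV n q k
  have h2 : Measurable fun u : Fin n → ℝ => lamHat (Function.update u k (q/2)) :=
    (measurable_lamHat n q lamHat hstop).comp h1
  have h3 : Measurable fun u : Fin n → ℝ =>
      (hiCountV n (Function.update u k (q/2)) (lamHat (Function.update u k (q/2))) : ℝ) :=
    (measurable_from_top (f := fun m : ℕ => (m:ℝ))).comp
      ((meas_hiCountV_joint n).comp (h1.prodMk h2))
  refine Measurable.div ?_ (measurable_const.add h3)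
  refine Measurable.ite ?_ measurable_const measurable_const
  exact measurableSet_le h2 (measurable_pi_apply k)
end meas

-- bounds
lemma div_le_self_of_one_le_den {a b : ℝ} (ha : 0 ≤ a) (hb : 1 ≤ b) : a / b ≤ a := by
  rw [div_le_iff₀ (lt_of_lt_of_le one_pos hb)]
  nlinarith

lemma GV_bounds (n : ℕ) (q : ℝ) (hq : q ∈ Set.Ioo (0:ℝ) 1)
    (lamHat : (Fin n → ℝ) → ℝ) (hrange : ∀ u, lamHat u ∈ Set.Icc q 1) (k : Fin n)
    (u : Fin n → ℝ) : GV n q lamHat k u ∈ Set.Icc 0 (n:ℝ) := by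
  unfold GV
  set lam := lamHat (Function.update u k (q/2)) with hlam
  have h1 : q ≤ lam := (hrange _).1
  have h2 : lam ≤ 1 := (hrange _).2
  have hden : (1:ℝ) ≤ 1 + (hiCountV n (Function.update u k (q/2)) lam : ℝ) := by
    have : (0:ℝ) ≤ (hiCountV n (Function.update u k (q/2)) lam : ℝ) := Nat.cast_nonneg _
    linarith
  constructor
  · apply div_nonneg _ (by linarith)
    have : (0:ℝ) ≤ (n:ℝ) := Nat.cast_nonneg _
    nlinarith
  · calc ((n:ℝ) * (1 - lam)) / (1 + (hiCountV n (Function.update u k (q/2)) lam : ℝ))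
        ≤ (n:ℝ) * (1 - lam) := by
          apply div_le_self_of_one_le_den _ hden
          nlinarith [Nat.cast_nonneg (α := ℝ) n]
      _ ≤ (n:ℝ) := by nlinarith [Nat.cast_nonneg (α := ℝ) n, hq.1]

lemma TermV_bounds (n : ℕ) (q : ℝ) (lamHat : (Fin n → ℝ) → ℝ) (k : Fin n)
    (u : Fin n → ℝ) : TermV n q lamHat k u ∈ Set.Icc 0 1 := by
  unfold TermV
  have hden : (1:ℝ) ≤ 1 + (hiCountV n (Function.update u k (q/2))
      (lamHat (Function.update u k (q/2))) : ℝ) := by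
    have : (0:ℝ) ≤ (hiCountV n (Function.update u k (q/2))
        (lamHat (Function.update u k (q/2))) : ℝ) := Nat.cast_nonneg _
    linarith
  have hnum : (if lamHat (Function.update u k (q/2)) ≤ u k then (1:ℝ) else 0) ∈
      Set.Icc (0:ℝ) 1 := by split <;> simp
  constructor
  · exact div_nonneg hnum.1 (by linarith)
  · exact le_trans (div_le_self_of_one_le_den hnum.1 hden) hnum.2

lemma sum_TermV_le_one (n : ℕ) (q : ℝ) (hq0 : 0 < q)
    (lamHat : (Fin n → ℝ) → ℝ)
    (hrange : ∀ u, lamHat u ∈ Set.Icc q 1)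
    (hstop : ∀ t : ℝ, MeasurableSet[storeyFiltV n q t] {u | lamHat u ≤ t})
    (N : Finset (Fin n)) (u : Fin n → ℝ) :
    ∑ k ∈ N, TermV n q lamHat k u ≤ 1 := by
  unfold TermV
  classical
  set T : Fin n → ℝ := fun k => lamHat (Function.update u k (q/2)) with hT
  set K : Finset (Fin n) := N.filter (fun k => T k ≤ u k) with hK
  -- all active indices share the same lambda value
  have hsame : ∀ k ∈ K, ∀ l ∈ K, T k = T l := by
    have key : ∀ k ∈ K, ∀ l ∈ K, T k ≤ T l → T l ≤ T k := by
      intro k hk l hl hkl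
      simp only [hK, Finset.mem_filter] at hk hl
      have hqk : q ≤ T k := (hrange _).1
      have hagree : ∀ s ∈ Set.Icc q (T k),
          hiCountV n (Function.update u l (q/2)) s
            = hiCountV n (Function.update u k (q/2)) s := by
        intro s hs
        have h1 := hiCountV_update n q hq0 k u s hs.1 (hs.2.trans hk.2)
        have h2 := hiCountV_update n q hq0 l u s hs.1 ((hs.2.trans hkl).trans hl.2)
        omega
      exact (lamHat_det n q lamHat hstop (T k) _ _ hagree).mpr le_rfl
    intro k hk l hl
    rcases le_total (T k) (T l) with h | h
    · exact le_antisymm h (key k hk l hl h)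
    · exact le_antisymm (key l hl k hk h) h
  rcases Finset.eq_empty_or_nonempty K with hKe | ⟨k₀, hk₀⟩
  · have : ∀ k ∈ N, (if T k ≤ u k then (1:ℝ) else 0) /
        (1 + (hiCountV n (Function.update u k (q/2)) (T k) : ℝ)) = 0 := by
      intro k hk
      have : ¬ T k ≤ u k := by
        intro h
        exact absurd (hK ▸ Finset.mem_filter.mpr ⟨hk, h⟩) (by simp [hKe])
      simp [this]
    rw [Finset.sum_congr rfl this]
    simp
  · set T₀ : ℝ := T k₀ with hT0
    have hq0' : q ≤ T₀ := (hrange _).1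
    have huk0 : T₀ ≤ u k₀ := (Finset.mem_filter.mp hk₀).2
    have hden : 0 < (hiCountV n u T₀ : ℝ) := by
      have := hiCountV_update n q hq0 k₀ u T₀ hq0' huk0
      have : 1 ≤ hiCountV n u T₀ := by omega
      exact_mod_cast Nat.lt_of_lt_of_le Nat.zero_lt_one this
    have hterm : ∀ k ∈ N, (if T k ≤ u k then (1:ℝ) else 0) /
        (1 + (hiCountV n (Function.update u k (q/2)) (T k) : ℝ))
        = if k ∈ K then (hiCountV n u T₀ : ℝ)⁻¹ else 0 := by
      intro k hk
      by_cases hkK : k ∈ K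
      · have hTk : T k = T₀ := hsame k hkK k₀ hk₀
        have hukk : T k ≤ u k := (Finset.mem_filter.mp hkK).2
        have hcount := hiCountV_update n q hq0 k u (T k) (hrange _).1 hukk
        rw [if_pos hukk, if_pos hkK]
        rw [show (1 + (hiCountV n (Function.update u k (q/2)) (T k) : ℝ))
            = (hiCountV n u T₀ : ℝ) by rw [← hTk]; exact_mod_cast by omega]
        rw [one_div]
      · have : ¬ T k ≤ u k := fun h => hkK (Finset.mem_filter.mpr ⟨hk, h⟩)
        simp [this, hkK]
    rw [Finset.sum_congr rfl hterm, Finset.sum_ite_mem, Finset.inter_eq_right.mpr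
      (Finset.filter_subset _ _), Finset.sum_const, nsmul_eq_mul]
    -- K.card ≤ hiCountV n u T₀
    have hcard : (K.card : ℝ) ≤ (hiCountV n u T₀ : ℝ) := by
      have : K ⊆ Finset.univ.filter fun j => T₀ ≤ u j := by
        intro k hk
        have : T k ≤ u k := (Finset.mem_filter.mp hk).2
        rw [hsame k hk k₀ hk₀] at this
        exact Finset.mem_filter.mpr ⟨Finset.mem_univ _, this⟩
      exact_mod_cast Finset.card_le_card this
    rw [mul_inv_le_iff₀ hden, one_mul]
    exact hcard


lemma unif_prob : IsProbabilityMeasure (volume.restrict (Set.Ioo (0:ℝ) 1)) := by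
  constructor
  rw [Measure.restrict_apply MeasurableSet.univ, Set.univ_inter, Real.volume_Ioo]
  simp

lemma unif_indicator_integral (a : ℝ) (ha0 : 0 < a) (ha1 : a ≤ 1) :
    ∫ x, (if a ≤ x then (1:ℝ) else 0) ∂(volume.restrict (Set.Ioo (0:ℝ) 1))
      = 1 - a := by
  have h1 : (fun x : ℝ => if a ≤ x then (1:ℝ) else 0)
      = (Set.Ici a).indicator (fun _ => (1:ℝ)) := by
    funext x; simp [Set.indicator_apply, Set.mem_Ici]
  rw [h1, integral_indicator_const _ measurableSet_Ici]
  rw [measureReal_def, Measure.restrict_apply measurableSet_Ici]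
  have h2 : Set.Ici a ∩ Set.Ioo (0:ℝ) 1 = Set.Ico a 1 := by
    ext x
    simp only [Set.mem_inter_iff, Set.mem_Ici, Set.mem_Ioo, Set.mem_Ico]
    constructor
    · rintro ⟨h, -, h2⟩; exact ⟨h, h2⟩
    · rintro ⟨h, h2⟩; exact ⟨h, lt_of_lt_of_le ha0 h, h2⟩
  rw [h2, Real.volume_Ico, smul_eq_mul, mul_one, ENNReal.toReal_ofReal (by linarith)]


section swapinv
variable {Ω : Type*} [MeasurableSpace Ω] (P : Measure Ω) [IsProbabilityMeasure P]
  (n : ℕ) (p : Fin n → Ω → ℝ) (hmeas : ∀ i, Measurable (p i))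
  (N : Finset (Fin n))
  (hunif : ∀ i ∈ N, P.map (p i) = volume.restrict (Set.Ioo (0 : ℝ) 1))
  (hindep : ∀ i ∈ N,
      IndepFun (p i) (fun ω => fun j : {j : Fin n // j ≠ i} => p j.1 ω) P)

include hmeas hunif hindep in
/-- factor out one null coordinate from a cylinder event -/
lemma factor_one (k : Fin n) (hk : k ∈ N) (A : Fin n → Set ℝ)
    (hA : ∀ j, MeasurableSet (A j)) :
    P (⋂ j, p j ⁻¹' (A j))
      = (volume.restrict (Set.Ioo (0:ℝ) 1)) (A k)
        * P (⋂ j, p j ⁻¹' (Function.update A k Set.univ j)) := by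
  set rest : Ω → ({j : Fin n // j ≠ k} → ℝ) := fun ω => fun j => p j.1 ω with hrest
  have hrestm : Measurable rest := measurable_pi_lambda _ fun j => hmeas j.1
  set B : Set ({j : Fin n // j ≠ k} → ℝ) := Set.univ.pi fun j => A j.1 with hB
  have hBm : MeasurableSet B := MeasurableSet.univ_pi fun j => hA j.1
  have h1 : (⋂ j, p j ⁻¹' (A j)) = p k ⁻¹' (A k) ∩ rest ⁻¹' B := by
    ext ω
    simp only [Set.mem_iInter, Set.mem_inter_iff, Set.mem_preimage, hB, Set.mem_pi,
      Set.mem_univ, true_implies, hrest]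
    constructor
    · intro h; exact ⟨h k, fun j => h j.1⟩
    · rintro ⟨hk', h⟩ j
      rcases eq_or_ne j k with rfl | hj
      · exact hk'
      · exact h ⟨j, hj⟩
  have h2 : (⋂ j, p j ⁻¹' (Function.update A k Set.univ j)) = rest ⁻¹' B := by
    ext ω
    simp only [Set.mem_iInter, Set.mem_preimage, hB, Set.mem_pi, Set.mem_univ, true_implies,
      hrest]
    constructor
    · intro h j; have := h j.1; rwa [Function.update_of_ne j.2] at this
    · intro h j
      rcases eq_or_ne j k with rfl | hj
      · simp [Function.update_self]
      · rw [Function.update_of_ne hj]; exact h ⟨j, hj⟩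
  have hpk : P (p k ⁻¹' (A k)) = (volume.restrict (Set.Ioo (0:ℝ) 1)) (A k) := by
    rw [← hunif k hk, Measure.map_apply (hmeas k) (hA k)]
  rw [h1, h2, (hindep k hk).measure_inter_preimage_eq_mul _ _ (hA k) hBm, hpk]

include hmeas hunif hindep in
/-- two-coordinate factorization -/
lemma factor_two (i k : Fin n) (hi : i ∈ N) (hk : k ∈ N) (hik : i ≠ k)
    (A : Fin n → Set ℝ) (hA : ∀ j, MeasurableSet (A j)) :
    P (⋂ j, p j ⁻¹' (A j))
      = (volume.restrict (Set.Ioo (0:ℝ) 1)) (A i)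
        * ((volume.restrict (Set.Ioo (0:ℝ) 1)) (A k)
        * P (⋂ j, p j ⁻¹' (Function.update (Function.update A i Set.univ) k Set.univ j))) := by
  rw [factor_one P n p hmeas N hunif hindep i hi A hA]
  congr 1
  have hA' : ∀ j, MeasurableSet (Function.update A i Set.univ j) := by
    intro j
    rcases eq_or_ne j i with rfl | hj
    · simp
    · rw [Function.update_of_ne hj]; exact hA j
  rw [factor_one P n p hmeas N hunif hindep k hk _ hA']
  rw [Function.update_of_ne (Ne.symm hik)]

include hmeas hunif hindep in
/-- the law of the p-value vector is invariant under swapping two null coordinates -/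
lemma swap_invariant (i k : Fin n) (hi : i ∈ N) (hk : k ∈ N) (hik : i ≠ k) :
    (P.map (fun ω => fun j => p j ω)).map (fun u : Fin n → ℝ => u ∘ Equiv.swap i k)
      = P.map (fun ω => fun j => p j ω) := by
  have hpv : Measurable (fun ω => fun j => p j ω) := measurable_pi_lambda _ hmeas
  have hsw : Measurable (fun u : Fin n → ℝ => u ∘ Equiv.swap i k) :=
    measurable_pi_lambda _ fun j => measurable_pi_apply _
  have hμ : IsProbabilityMeasure (P.map (fun ω => fun j => p j ω)) :=
    Measure.isProbabilityMeasure_map hpv.aemeasurable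
  have hupd : ∀ (C : Fin n → Set ℝ) (j : Fin n),
      Function.update (Function.update C i Set.univ) k Set.univ j
        = if j = i ∨ j = k then Set.univ else C j := by
    intro C j
    rcases eq_or_ne j k with rfl | hjk
    · simp
    · rw [Function.update_of_ne hjk]
      rcases eq_or_ne j i with rfl | hji
      · simp
      · rw [Function.update_of_ne hji, if_neg (by tauto)]
  refine ext_of_generate_finite _ generateFrom_pi.symm isPiSystem_pi ?_ ?_
  · rintro _ ⟨A, hA, rfl⟩
    simp only [Set.mem_pi, Set.mem_univ, true_implies, Set.mem_setOf_eq] at hA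
    have hbox : ∀ (B : Fin n → Set ℝ), (∀ j, MeasurableSet (B j)) →
        (P.map (fun ω => fun j => p j ω)) (Set.univ.pi B) = P (⋂ j, p j ⁻¹' (B j)) := by
      intro B hB
      rw [Measure.map_apply hpv (MeasurableSet.univ_pi hB)]
      congr 1
      ext ω
      simp [Set.mem_pi]
    have hpre : (fun u : Fin n → ℝ => u ∘ Equiv.swap i k) ⁻¹' (Set.univ.pi A)
        = Set.univ.pi (fun j => A (Equiv.swap i k j)) := by
      ext u
      simp only [Set.mem_preimage, Set.mem_pi, Set.mem_univ, true_implies,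
        Function.comp_apply]
      constructor
      · intro h j
        have := h (Equiv.swap i k j)
        rwa [Equiv.swap_apply_self] at this
      · intro h j
        have := h (Equiv.swap i k j)
        rwa [Equiv.swap_apply_self] at this
    rw [Measure.map_apply hsw (MeasurableSet.univ_pi fun j => hA j), hpre,
      hbox _ (fun j => hA (Equiv.swap i k j)), hbox _ hA]
    rw [factor_two P n p hmeas N hunif hindep i k hi hk hik _
      (fun j => hA (Equiv.swap i k j)),
      factor_two P n p hmeas N hunif hindep i k hi hk hik A hA]
    rw [Equiv.swap_apply_left, Equiv.swap_apply_right]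
    have hE : (⋂ j, p j ⁻¹' (Function.update (Function.update
          (fun j => A (Equiv.swap i k j)) i Set.univ) k Set.univ j))
        = ⋂ j, p j ⁻¹' (Function.update (Function.update A i Set.univ) k Set.univ j) := by
      apply Set.iInter_congr
      intro j
      rw [hupd, hupd]
      rcases eq_or_ne j i with rfl | hji
      · simp
      rcases eq_or_ne j k with rfl | hjk
      · simp
      · rw [if_neg (by tauto), if_neg (by tauto), Equiv.swap_apply_of_ne_of_ne hji hjk]
    rw [hE]
    ring
  · have h2 : IsProbabilityMeasure ((P.map (fun ω => fun j => p j ω)).map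
        (fun u : Fin n → ℝ => u ∘ Equiv.swap i k)) :=
      Measure.isProbabilityMeasure_map hsw.aemeasurable
    rw [h2.measure_univ, hμ.measure_univ]

end swapinv

section claimB
variable {Ω : Type*} [MeasurableSpace Ω] (P : Measure Ω) [IsProbabilityMeasure P]
  (n : ℕ) (p : Fin n → Ω → ℝ) (hmeas : ∀ i, Measurable (p i))
  (N : Finset (Fin n))
  (hunif : ∀ i ∈ N, P.map (p i) = volume.restrict (Set.Ioo (0 : ℝ) 1))
  (hindep : ∀ i ∈ N,
      IndepFun (p i) (fun ω => fun j : {j : Fin n // j ≠ i} => p j.1 ω) P)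
  (q : ℝ) (hq : q ∈ Set.Ioo (0:ℝ) 1)
  (lamHat : (Fin n → ℝ) → ℝ) (hrange : ∀ u, lamHat u ∈ Set.Icc q 1)
  (hstop : ∀ t : ℝ, MeasurableSet[storeyFiltV n q t] {u | lamHat u ≤ t})

include hmeas hunif hindep hq hrange hstop in
lemma claimB (k : Fin n) (hk : k ∈ N) :
    ∫ ω, GV n q lamHat k (fun j => p j ω) ∂P
      = n * ∫ ω, TermV n q lamHat k (fun j => p j ω) ∂P := by
  classical
  set unif := volume.restrict (Set.Ioo (0:ℝ) 1) with huf
  haveI hufp : IsProbabilityMeasure unif := unif_prob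
  set rest : Ω → ({j : Fin n // j ≠ k} → ℝ) := fun ω => fun j => p j.1 ω with hrest
  have hrestm : Measurable rest := measurable_pi_lambda _ fun j => hmeas j.1
  set ν := P.map rest with hν
  haveI : IsProbabilityMeasure ν := Measure.isProbabilityMeasure_map hrestm.aemeasurable
  set emb : ({j : Fin n // j ≠ k} → ℝ) → (Fin n → ℝ) :=
    fun r j => if h : j = k then q/2 else r ⟨j, h⟩ with hemb
  have hembm : Measurable emb := by
    apply measurable_pi_lambda
    intro j
    rcases eq_or_ne j k with rfl | hj
    · simp only [hemb, dif_pos rfl]; exact measurable_const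
    · simp only [hemb, dif_neg hj]; exact measurable_pi_apply _
  have hlamm : Measurable lamHat := measurable_lamHat n q lamHat hstop
  set tf : ({j : Fin n // j ≠ k} → ℝ) → ℝ := fun r => lamHat (emb r) with htf
  have htfm : Measurable tf := hlamm.comp hembm
  set cf : ({j : Fin n // j ≠ k} → ℝ) → ℝ :=
    fun r => 1 + (hiCountV n (emb r) (tf r) : ℝ) with hcf
  have hcfm : Measurable cf := by
    apply measurable_const.add
    exact (measurable_from_top (f := fun m : ℕ => (m:ℝ))).comp
      ((meas_hiCountV_joint n).comp (hembm.prodMk htfm))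
  have hcf1 : ∀ r, (1:ℝ) ≤ cf r := by
    intro r
    have : (0:ℝ) ≤ (hiCountV n (emb r) (tf r) : ℝ) := Nat.cast_nonneg _
    simp only [hcf]; linarith
  have htf_mem : ∀ r, tf r ∈ Set.Icc q 1 := fun r => hrange _
  -- the key collapse: update of the pv vector equals emb of rest
  have hcollapse : ∀ ω, Function.update (fun j => p j ω) k (q/2) = emb (rest ω) := by
    intro ω
    funext j
    rcases eq_or_ne j k with rfl | hj
    · simp [hemb, Function.update_self]
    · simp [hemb, Function.update_of_ne hj, dif_neg hj, hrest]
  set Gp : ℝ × ({j : Fin n // j ≠ k} → ℝ) → ℝ :=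
    fun x => ((n:ℝ) * (1 - tf x.2)) / cf x.2 with hGp
  set Tp : ℝ × ({j : Fin n // j ≠ k} → ℝ) → ℝ :=
    fun x => (if tf x.2 ≤ x.1 then (1:ℝ) else 0) / cf x.2 with hTp
  have hGpm : Measurable Gp :=
    ((measurable_const.mul (measurable_const.sub (htfm.comp measurable_snd)))).div
      (hcfm.comp measurable_snd)
  have hTpm : Measurable Tp := by
    refine Measurable.div ?_ (hcfm.comp measurable_snd)
    exact Measurable.ite (measurableSet_le (htfm.comp measurable_snd) measurable_fst)
      measurable_const measurable_const
  set pair : Ω → ℝ × ({j : Fin n // j ≠ k} → ℝ) := fun ω => (p k ω, rest ω) with hpair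
  have hpairm : Measurable pair := (hmeas k).prodMk hrestm
  have hjoint : P.map pair = unif.prod ν := by
    rw [hpair, hν, ← hunif k hk]
    exact (indepFun_iff_map_prod_eq_prod_map_map (hmeas k).aemeasurable
      hrestm.aemeasurable).mp (hindep k hk)
  -- integrability over the product
  have hGint : Integrable Gp (unif.prod ν) := by
    refine Integrable.mono' (integrable_const ((n:ℝ))) hGpm.aestronglyMeasurable ?_
    refine Filter.Eventually.of_forall fun x => ?_
    rw [Real.norm_eq_abs, abs_of_nonneg]
    · calc Gp x ≤ (n:ℝ) * (1 - tf x.2) := by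
            apply div_le_self_of_one_le_den ?_ (hcf1 x.2)
            nlinarith [Nat.cast_nonneg (α := ℝ) n, (htf_mem x.2).2]
        _ ≤ (n:ℝ) := by nlinarith [Nat.cast_nonneg (α := ℝ) n, (htf_mem x.2).1,
            (htf_mem x.2).2, hq.1]
    · apply div_nonneg ?_ (by linarith [hcf1 x.2])
      nlinarith [Nat.cast_nonneg (α := ℝ) n, (htf_mem x.2).2]
  have hTint : Integrable Tp (unif.prod ν) := by
    refine Integrable.mono' (integrable_const (1:ℝ)) hTpm.aestronglyMeasurable ?_
    refine Filter.Eventually.of_forall fun x => ?_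
    rw [Real.norm_eq_abs, abs_of_nonneg]
    · calc Tp x ≤ (if tf x.2 ≤ x.1 then (1:ℝ) else 0) := by
            apply div_le_self_of_one_le_den ?_ (hcf1 x.2)
            split <;> norm_num
        _ ≤ 1 := by split <;> norm_num
    · apply div_nonneg ?_ (by linarith [hcf1 x.2])
      split <;> norm_num
  -- rewrite P-integrals as product-measure integrals
  have hGrw : ∫ ω, GV n q lamHat k (fun j => p j ω) ∂P = ∫ x, Gp x ∂(unif.prod ν) := by
    rw [← hjoint, integral_map hpairm.aemeasurable hGpm.aestronglyMeasurable]
    congr 1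
    funext ω
    simp only [GV, hGp, hcollapse ω, Function.comp_apply, htf, hcf, hpair]
  have hTrw : ∫ ω, TermV n q lamHat k (fun j => p j ω) ∂P = ∫ x, Tp x ∂(unif.prod ν) := by
    rw [← hjoint, integral_map hpairm.aemeasurable hTpm.aestronglyMeasurable]
    congr 1
    funext ω
    simp only [TermV, hTp, hcollapse ω, Function.comp_apply, htf, hcf, hpair]
  rw [hGrw, hTrw]
  rw [integral_prod_symm _ hGint, integral_prod_symm _ hTint]
  have hinnerG : ∀ r, ∫ x, Gp (x, r) ∂unif = ((n:ℝ) * (1 - tf r)) / cf r := by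
    intro r
    simp only [hGp]
    rw [integral_const]
    simp [hufp.measure_univ]
  have hinnerT : ∀ r, ∫ x, Tp (x, r) ∂unif = (1 - tf r) / cf r := by
    intro r
    simp only [hTp, div_eq_mul_inv]
    rw [integral_mul_const,
      unif_indicator_integral (tf r) (lt_of_lt_of_le hq.1 (htf_mem r).1) (htf_mem r).2]
  rw [integral_congr_ae (Filter.Eventually.of_forall hinnerG),
    integral_congr_ae (Filter.Eventually.of_forall hinnerT)]
  have : ∀ r, ((n:ℝ) * (1 - tf r)) / cf r = (n:ℝ) * ((1 - tf r) / cf r) := by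
    intro r; rw [mul_div_assoc]
  rw [integral_congr_ae (Filter.Eventually.of_forall this), MeasureTheory.integral_const_mul]

end claimB

/-- for independent p-values with uniform nulls and a stopping-time
hyper-parameter `λ̂ ∈ [q,1]` with respect to `G_t`, the leave-one-out adaptive Storey
estimator at a null index `i` satisfies `E[1/π̂₀^{λ̂,-i}] ≤ n/n₀`. -/
theorem statement7
    {Ω : Type*} [MeasurableSpace Ω] (P : Measure Ω) [IsProbabilityMeasure P]
    (n : ℕ) (p : Fin n → Ω → ℝ)
    (hmeas : ∀ i, Measurable (p i))
    (hval : ∀ i ω, p i ω ∈ Set.Ioo (0 : ℝ) 1)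
    (N : Finset (Fin n)) (hN : 1 ≤ N.card)
    (hunif : ∀ i ∈ N, P.map (p i) = volume.restrict (Set.Ioo (0 : ℝ) 1))
    (hindep : ∀ i ∈ N,
      IndepFun (p i) (fun ω => fun j : {j : Fin n // j ≠ i} => p j.1 ω) P)
    (q : ℝ) (hq : q ∈ Set.Ioo (0 : ℝ) 1)
    (lamHat : (Fin n → ℝ) → ℝ) (hrange : ∀ u, lamHat u ∈ Set.Icc q 1)
    (hstop : ∀ t : ℝ, MeasurableSet[storeyFiltV n q t] {u | lamHat u ≤ t})
    (i : Fin n) (hi : i ∈ N) :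
    ∫ ω, (pi0LOO n q lamHat i (fun j => p j ω))⁻¹ ∂P ≤ (n : ℝ) / N.card := by
  classical
  have hpv : Measurable (fun ω => fun j => p j ω) := measurable_pi_lambda _ hmeas
  -- step 0 : rewrite the integrand as `GV i ∘ pv`
  have hintegrand : ∀ ω, (pi0LOO n q lamHat i (fun j => p j ω))⁻¹
      = GV n q lamHat i (fun j => p j ω) := by
    intro ω
    rw [pi0LOO_eq n q lamHat hrange hstop hq.1 i]
    rw [storeyPi0V, GV, inv_div]
  rw [integral_congr_ae (Filter.Eventually.of_forall hintegrand)]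
  -- integrability of all the pieces
  have hGint : ∀ k : Fin n, Integrable (fun ω => GV n q lamHat k (fun j => p j ω)) P := by
    intro k
    refine Integrable.mono' (integrable_const ((n:ℝ)))
      (((measurable_GV n q lamHat hstop k).comp hpv).aestronglyMeasurable) ?_
    refine Filter.Eventually.of_forall fun ω => ?_
    have := GV_bounds n q hq lamHat hrange k (fun j => p j ω)
    rw [Real.norm_eq_abs, abs_of_nonneg this.1]
    exact this.2
  have hTint : ∀ k : Fin n, Integrable (fun ω => TermV n q lamHat k (fun j => p j ω)) P := by
    intro k
    refine Integrable.mono' (integrable_const (1:ℝ))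
      (((measurable_TermV n q lamHat hstop k).comp hpv).aestronglyMeasurable) ?_
    refine Filter.Eventually.of_forall fun ω => ?_
    have := TermV_bounds n q lamHat k (fun j => p j ω)
    rw [Real.norm_eq_abs, abs_of_nonneg this.1]
    exact this.2
  -- claim A : all integrals ∫ GV k agree with ∫ GV i
  have hclaimA : ∀ k ∈ N, ∫ ω, GV n q lamHat k (fun j => p j ω) ∂P
      = ∫ ω, GV n q lamHat i (fun j => p j ω) ∂P := by
    intro k hk
    rcases eq_or_ne k i with rfl | hik
    · rfl
    have hik' : i ≠ k := hik.symm
    have hGswap : ∀ u : Fin n → ℝ,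
        GV n q lamHat k u = GV n q lamHat i (u ∘ Equiv.swap i k) := by
      intro u
      have hupdeq : Function.update (u ∘ Equiv.swap i k) i (q/2)
          = (Function.update u k (q/2)) ∘ Equiv.swap i k := by
        funext j
        rcases eq_or_ne j i with rfl | hj
        · rw [Function.update_self, Function.comp_apply, Equiv.swap_apply_left,
            Function.update_self]
        · rw [Function.update_of_ne hj, Function.comp_apply, Function.comp_apply,
            Function.update_of_ne ?hne]
          case hne =>
            intro h
            exact hj ((Equiv.swap i k).injective (h.trans (Equiv.swap_apply_left i k).symm))
      have hlam : lamHat ((Function.update u k (q/2)) ∘ Equiv.swap i k)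
          = lamHat (Function.update u k (q/2)) :=
        lamHat_eq_of_agree n q lamHat hstop _ _
          (fun s _ => hiCountV_comp_perm n (Equiv.swap i k) _ s)
      rw [GV, GV, hupdeq, hlam, hiCountV_comp_perm]
    have hswm : Measurable (fun u : Fin n → ℝ => u ∘ Equiv.swap i k) :=
      measurable_pi_lambda _ fun j => measurable_pi_apply _
    calc ∫ ω, GV n q lamHat k (fun j => p j ω) ∂P
        = ∫ u, GV n q lamHat k u ∂(P.map (fun ω => fun j => p j ω)) := by
          rw [integral_map hpv.aemeasurable
            (measurable_GV n q lamHat hstop k).aestronglyMeasurable]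
      _ = ∫ u, GV n q lamHat i (u ∘ Equiv.swap i k)
            ∂(P.map (fun ω => fun j => p j ω)) := by
          exact integral_congr_ae (Filter.Eventually.of_forall fun u => hGswap u)
      _ = ∫ u, GV n q lamHat i u
            ∂((P.map (fun ω => fun j => p j ω)).map
                (fun u : Fin n → ℝ => u ∘ Equiv.swap i k)) := by
          rw [integral_map hswm.aemeasurable
            (measurable_GV n q lamHat hstop i).aestronglyMeasurable]
      _ = ∫ u, GV n q lamHat i u ∂(P.map (fun ω => fun j => p j ω)) := by
          rw [swap_invariant P n p hmeas N hunif hindep i k hi hk hik']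
      _ = ∫ ω, GV n q lamHat i (fun j => p j ω) ∂P := by
          rw [integral_map hpv.aemeasurable
            (measurable_GV n q lamHat hstop i).aestronglyMeasurable]
  -- sum bound
  have hsum : ∑ k ∈ N, ∫ ω, TermV n q lamHat k (fun j => p j ω) ∂P ≤ 1 := by
    rw [← integral_finset_sum N (fun k _ => hTint k)]
    calc ∫ ω, ∑ k ∈ N, TermV n q lamHat k (fun j => p j ω) ∂P
        ≤ ∫ _ω, (1:ℝ) ∂P := by
          apply integral_mono (integrable_finset_sum N fun k _ => hTint k)
            (integrable_const 1)
          intro ω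
          exact sum_TermV_le_one n q hq.1 lamHat hrange hstop N (fun j => p j ω)
      _ = 1 := by simp
  -- put everything together
  have hkey : (N.card : ℝ) * ∫ ω, GV n q lamHat i (fun j => p j ω) ∂P ≤ n := by
    have h1 : (N.card : ℝ) * ∫ ω, GV n q lamHat i (fun j => p j ω) ∂P
        = ∑ k ∈ N, ∫ ω, GV n q lamHat k (fun j => p j ω) ∂P := by
      rw [Finset.sum_congr rfl hclaimA, Finset.sum_const, nsmul_eq_mul]
    have h2 : ∑ k ∈ N, ∫ ω, GV n q lamHat k (fun j => p j ω) ∂P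
        = (n:ℝ) * ∑ k ∈ N, ∫ ω, TermV n q lamHat k (fun j => p j ω) ∂P := by
      rw [Finset.mul_sum]
      exact Finset.sum_congr rfl fun k hk =>
        claimB P n p hmeas N hunif hindep q hq lamHat hrange hstop k hk
    rw [h1, h2]
    calc (n:ℝ) * ∑ k ∈ N, ∫ ω, TermV n q lamHat k (fun j => p j ω) ∂P
        ≤ (n:ℝ) * 1 := by
          apply mul_le_mul_of_nonneg_left hsum (Nat.cast_nonneg n)
      _ = n := mul_one _
  have hcard : (0:ℝ) < (N.card : ℝ) := by exact_mod_cast hN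
  rw [le_div_iff₀ hcard]
  linarith [hkey]
end

section
/- Let X be a random variable taking values in (0,1) with a density f (with respect to Lebesgue measure) that is nondecreasing on the interval [q,1], and suppose P(X ≥ s) > 0 for s ∈ [q,1). Then X satisfies the conditional stochastic dominance property: P(X ≥ t | X ≥ s) ≥ (1−t)/(1−s) for all q ≤ s ≤ t ≤ 1. -/
set_option autoImplicit false

open MeasureTheory

/-- a `(0,1)`-valued random variable with a Lebesgue density that is
nondecreasing on `[q,1]`, and with `P(X ≥ s) > 0` for `s ∈ [q,1)`, satisfies the conditional
stochastic dominance property `P(X ≥ t | X ≥ s) ≥ (1-t)/(1-s)` for all `q ≤ s ≤ t ≤ 1`. -/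
theorem statement8
    {Ω : Type*} [MeasurableSpace Ω] (P : Measure Ω) [IsProbabilityMeasure P]
    (X : Ω → ℝ) (hXmeas : Measurable X)
    (hval : ∀ ω, X ω ∈ Set.Ioo (0 : ℝ) 1)
    (f : ℝ → ℝ) (hf : Measurable f)
    (hdens : P.map X = volume.withDensity fun t => ENNReal.ofReal (f t))
    (q : ℝ) (hq : q ∈ Set.Ioo (0 : ℝ) 1)
    (hmono : ∀ a b : ℝ, q ≤ a → a ≤ b → b ≤ 1 → f a ≤ f b)
    (hpos : ∀ s ∈ Set.Ico q 1, 0 < P {ω | s ≤ X ω}) :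
    ∀ s t : ℝ, q ≤ s → s ≤ t → t ≤ 1 →
      ENNReal.ofReal ((1 - t) / (1 - s)) ≤ P {ω | t ≤ X ω} / P {ω | s ≤ X ω} := by
  intro s t hqs hst ht1
  -- dispatch the trivial case t = 1
  rcases eq_or_lt_of_le ht1 with rfl | ht1
  · simp
  have hs1 : s < 1 := lt_of_le_of_lt hst ht1
  -- express P {ω | u ≤ X ω} as an integral over Ico u 1
  have key : ∀ u : ℝ, u ≤ 1 →
      P {ω | u ≤ X ω} = ∫⁻ x in Set.Ico u 1, ENNReal.ofReal (f x) := by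
    intro u hu1
    have h1 : {ω | u ≤ X ω} = X ⁻¹' Set.Ici u := rfl
    have h2 : P (X ⁻¹' Set.Ici u) = P.map X (Set.Ici u) :=
      (Measure.map_apply hXmeas measurableSet_Ici).symm
    have h3 : P.map X (Set.Ici u) = ∫⁻ x in Set.Ici u, ENNReal.ofReal (f x) := by
      rw [hdens, withDensity_apply _ measurableSet_Ici]
    have hzero : (∫⁻ x in Set.Ici (1:ℝ), ENNReal.ofReal (f x)) = 0 := by
      have : P.map X (Set.Ici (1:ℝ)) = 0 := by
        rw [Measure.map_apply hXmeas measurableSet_Ici]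
        have : X ⁻¹' Set.Ici (1:ℝ) = ∅ := by
          ext ω; simp [not_le.mpr (hval ω).2]
        simp [this]
      rw [hdens, withDensity_apply _ measurableSet_Ici] at this
      exact this
    have hsplit : Set.Ico u 1 ∪ Set.Ici (1:ℝ) = Set.Ici u := Set.Ico_union_Ici_eq_Ici hu1
    have hdisj : Disjoint (Set.Ico u (1:ℝ)) (Set.Ici (1:ℝ)) := by
      rw [Set.disjoint_left]
      intro x hx hx'
      exact absurd hx.2 (not_lt.mpr hx')
    rw [h1, h2, h3, ← hsplit, lintegral_union measurableSet_Ici hdisj, hzero, add_zero]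
  have hPt := key t (le_of_lt ht1)
  have hPs := key s (le_of_lt hs1)
  -- lower bound for Pt
  have L1 : ENNReal.ofReal (f t) * ENNReal.ofReal (1 - t) ≤ P {ω | t ≤ X ω} := by
    rw [hPt]
    calc ENNReal.ofReal (f t) * ENNReal.ofReal (1 - t)
        = ∫⁻ _ in Set.Ico t 1, ENNReal.ofReal (f t) := by
          rw [setLIntegral_const, Real.volume_Ico]
      _ ≤ ∫⁻ x in Set.Ico t 1, ENNReal.ofReal (f x) := by
          apply setLIntegral_mono' measurableSet_Ico
          intro x hx
          exact ENNReal.ofReal_le_ofReal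
            (hmono t x (le_trans hqs hst) hx.1 (le_of_lt hx.2))
  -- upper bound for the middle piece
  have L2 : (∫⁻ x in Set.Ico s t, ENNReal.ofReal (f x))
      ≤ ENNReal.ofReal (f t) * ENNReal.ofReal (t - s) := by
    calc (∫⁻ x in Set.Ico s t, ENNReal.ofReal (f x))
        ≤ ∫⁻ _ in Set.Ico s t, ENNReal.ofReal (f t) := by
          apply setLIntegral_mono' measurableSet_Ico
          intro x hx
          exact ENNReal.ofReal_le_ofReal
            (hmono x t (le_trans hqs hx.1) (le_of_lt hx.2) (le_of_lt ht1))
      _ = ENNReal.ofReal (f t) * ENNReal.ofReal (t - s) := by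
          rw [setLIntegral_const, Real.volume_Ico]
  -- split Ps = middle + Pt
  have hsplit2 : P {ω | s ≤ X ω}
      = (∫⁻ x in Set.Ico s t, ENNReal.ofReal (f x)) + P {ω | t ≤ X ω} := by
    rw [hPs, hPt, ← lintegral_union measurableSet_Ico
      (by
        rw [Set.disjoint_left]; intro x hx hx'; exact absurd hx'.1 (not_le.mpr hx.2)), Set.Ico_union_Ico_eq_Ico hst (le_of_lt ht1)]
  -- main inequality in ENNReal: (1-t) * Ps ≤ (1-s) * Pt
  have main : ENNReal.ofReal (1 - t) * P {ω | s ≤ X ω}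
      ≤ ENNReal.ofReal (1 - s) * P {ω | t ≤ X ω} := by
    rw [hsplit2, mul_add]
    have h1 : ENNReal.ofReal (1 - t) * ∫⁻ x in Set.Ico s t, ENNReal.ofReal (f x)
        ≤ ENNReal.ofReal (t - s) * P {ω | t ≤ X ω} := by
      calc ENNReal.ofReal (1 - t) * ∫⁻ x in Set.Ico s t, ENNReal.ofReal (f x)
          ≤ ENNReal.ofReal (1 - t) * (ENNReal.ofReal (f t) * ENNReal.ofReal (t - s)) :=
            mul_le_mul_right L2 _
        _ = ENNReal.ofReal (t - s) * (ENNReal.ofReal (f t) * ENNReal.ofReal (1 - t)) := by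
            ring
        _ ≤ ENNReal.ofReal (t - s) * P {ω | t ≤ X ω} := mul_le_mul_right L1 _
    calc ENNReal.ofReal (1 - t) * (∫⁻ x in Set.Ico s t, ENNReal.ofReal (f x))
          + ENNReal.ofReal (1 - t) * P {ω | t ≤ X ω}
        ≤ ENNReal.ofReal (t - s) * P {ω | t ≤ X ω}
          + ENNReal.ofReal (1 - t) * P {ω | t ≤ X ω} := add_le_add_left h1 _
      _ = (ENNReal.ofReal (t - s) + ENNReal.ofReal (1 - t)) * P {ω | t ≤ X ω} := by ring
      _ = ENNReal.ofReal (1 - s) * P {ω | t ≤ X ω} := by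
          rw [← ENNReal.ofReal_add (by linarith) (by linarith)]
          norm_num
  -- finish: divide
  have hPs0 : P {ω | s ≤ X ω} ≠ 0 := (hpos s ⟨hqs, hs1⟩).ne'
  have hPstop : P {ω | s ≤ X ω} ≠ ⊤ := (measure_lt_top P _).ne
  rw [ENNReal.le_div_iff_mul_le (Or.inl hPs0) (Or.inl hPstop)]
  have h1s : (0:ℝ) < 1 - s := by linarith
  have hdiv : ENNReal.ofReal ((1 - t) / (1 - s))
      = ENNReal.ofReal (1 - t) / ENNReal.ofReal (1 - s) :=
    ENNReal.ofReal_div_of_pos h1s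
  have h1s0 : ENNReal.ofReal (1 - s) ≠ 0 := by
    simp only [ne_eq, ENNReal.ofReal_eq_zero, not_le]; linarith
  rw [hdiv, div_eq_mul_inv, mul_assoc, mul_comm (ENNReal.ofReal (1 - s))⁻¹, ← mul_assoc,
    ← div_eq_mul_inv, ENNReal.div_le_iff h1s0 ENNReal.ofReal_ne_top]
  calc ENNReal.ofReal (1 - t) * P {ω | s ≤ X ω}
      ≤ ENNReal.ofReal (1 - s) * P {ω | t ≤ X ω} := main
    _ = P {ω | t ≤ X ω} * ENNReal.ofReal (1 - s) := mul_comm _ _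
end

section
/- Let K ≥ 0 and k ≥ 1 be integers. Then Σ_{r=1}^{K+1} ((k−1)/(K+2−r))·C(K+k−r, k−1) = C(K+k, k−1) − 1, and moreover (C(K+k, k−1) − 1)/C(K+k, k) < k/(K+1), where C(a,b) denotes the binomial coefficient a choose b. -/
set_option autoImplicit false

lemma aux_sum (j n : ℕ) :
    (∑ i ∈ Finset.Icc (j+1) (j+1+n), Nat.choose i j) + 1 = (j+n+2).choose (j+1) := by
  induction n with
  | zero => simp [Nat.choose_succ_self_right]
  | succ n ih =>
    rw [show j+1+(n+1) = (j+1+n)+1 by ring, Finset.sum_Icc_succ_top (by omega),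
        show (j+1+n)+1 = j+n+2 by ring,
        show j+(n+1)+2 = (j+n+2)+1 by ring, Nat.choose_succ_succ']
    omega

/-- for integers `K ≥ 0` and `k ≥ 1`,
`Σ_{r=1}^{K+1} ((k-1)/(K+2-r))·C(K+k-r, k-1) = C(K+k, k-1) - 1`, and
`(C(K+k, k-1) - 1)/C(K+k, k) < k/(K+1)`. -/
theorem statement11 (K k : ℕ) (hk : 1 ≤ k) :
    (∑ r ∈ Finset.Icc 1 (K + 1),
        ((k : ℝ) - 1) / ((K : ℝ) + 2 - (r : ℝ)) * ((K + k - r).choose (k - 1) : ℝ)) =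
      ((K + k).choose (k - 1) : ℝ) - 1 ∧
    (((K + k).choose (k - 1) : ℝ) - 1) / ((K + k).choose k : ℝ) < (k : ℝ) / ((K : ℝ) + 1) := by
  have hBpos : 0 < (K + k).choose k := Nat.choose_pos (Nat.le_add_left k K)
  constructor
  · rcases eq_or_lt_of_le hk with h1 | h2
    · subst h1
      simp
    · obtain ⟨j, rfl⟩ : ∃ j, k = j + 2 := ⟨k - 2, by omega⟩
      have hterm : ∀ r ∈ Finset.Icc 1 (K+1),
          (((j+2 : ℕ) : ℝ) - 1) / ((K:ℝ)+2-(r:ℝ)) * ((K+(j+2)-r).choose ((j+2)-1) : ℝ)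
            = ((K+(j+2)-r).choose j : ℝ) := by
        intro r hr
        simp only [Finset.mem_Icc] at hr
        have h1 : (K+(j+2)-r).choose (j+1) * (j+1) = (K+(j+2)-r).choose j * (K+2-r) := by
          rw [Nat.choose_succ_right_eq (K+(j+2)-r) j]
          congr 1; omega
        have hd : (0:ℝ) < (K:ℝ)+2-(r:ℝ) := by
          have : (r:ℝ) ≤ (K:ℝ)+1 := by exact_mod_cast hr.2
          linarith
        have h1' : ((K+(j+2)-r).choose (j+1) : ℝ) * ((j:ℝ)+1)
            = ((K+(j+2)-r).choose j : ℝ) * ((K:ℝ)+2-(r:ℝ)) := by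
          have hc := congrArg (Nat.cast : ℕ → ℝ) h1
          push_cast [Nat.cast_sub (by omega : r ≤ K+2)] at hc
          linarith [hc]
        rw [show (j+2)-1 = j+1 from rfl]
        field_simp
        push_cast
        linarith [h1']
      rw [Finset.sum_congr rfl hterm]
      have hnat : ∑ r ∈ Finset.Icc 1 (K+1), (K+(j+2)-r).choose j
          = ∑ i ∈ Finset.Icc (j+1) (j+1+K), i.choose j := by
        apply Finset.sum_nbij' (i := fun r => K+(j+2)-r) (j := fun i => K+(j+2)-i) <;>
          intros a ha <;> simp_all [Finset.mem_Icc] <;>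
          first
          | omega
          | (congr 1; omega)
          | skip
      have key := aux_sum j K
      rw [← Nat.cast_sum, hnat]
      have : ((K + (j+2)).choose ((j+2)-1)) = (j+K+2).choose (j+1) := by congr 1 <;> omega
      rw [this, ← key]
      push_cast
      ring
  · have hA : (K + k).choose k * k = (K + k).choose (k - 1) * (K + 1) := by
      have h := Nat.choose_succ_right_eq (K + k) (k - 1)
      rw [show k - 1 + 1 = k by omega] at h
      rw [h]; congr 1; omega
    have hA' : ((K + k).choose k : ℝ) * k = ((K + k).choose (k-1) : ℝ) * ((K:ℝ)+1) := by
      exact_mod_cast congrArg (Nat.cast : ℕ → ℝ) hA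
    have hB : (0:ℝ) < ((K + k).choose k : ℝ) := by exact_mod_cast hBpos
    rw [div_lt_div_iff₀ hB (by positivity)]
    have hk' : (1:ℝ) ≤ (k:ℝ) := by exact_mod_cast hk
    nlinarith [hA']
end

section
/- Let K ≥ 0 and k ≥ 1 be integers and let X_1,…,X_{K+k} be exchangeable real-valued random variables that are almost surely pairwise distinct. Then for every r ∈ {1,…,K+1}, the probability that exactly r−1 of the variables X_1,…,X_K are strictly smaller than min{X_{K+1},…,X_{K+k}} equals C(K+k−r, k−1)/C(K+k, k). -/
set_option autoImplicit false

open MeasureTheory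

attribute [local instance] Classical.propDecidable


set_option maxHeartbeats 1000000

private lemma posSet_card (K k : ℕ) (f : Fin (K+k) ≃ (Fin K ⊕ Fin k)) :
    (Finset.univ.filter (fun i => (f i).isRight)).card = k := by
  classical
  have h1 : (Finset.univ.filter (fun i : Fin (K+k) => (f i).isRight)).card
      = (Finset.univ.filter (fun a : Fin K ⊕ Fin k => a.isRight)).card := by
    apply Finset.card_equiv f
    intro i
    simp
  rw [h1]
  have h2 : (Finset.univ.filter (fun a : Fin K ⊕ Fin k => a.isRight))
      = Finset.univ.map ⟨Sum.inr, Sum.inr_injective⟩ := by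
    ext a
    cases a <;> simp
  rw [h2]
  simp

private lemma fiber_card (K k : ℕ) (S : Finset (Fin (K+k))) (hS : S.card = k) :
    (Finset.univ.filter (fun f : Fin (K+k) ≃ (Fin K ⊕ Fin k) =>
      Finset.univ.filter (fun i => (f i).isRight) = S)).card
      = k.factorial * K.factorial := by
  classical
  have hcond : ∀ f : Fin (K+k) ≃ (Fin K ⊕ Fin k),
      (Finset.univ.filter (fun i => (f i).isRight) = S) ↔ (∀ i, (f i).isRight ↔ i ∈ S) := by
    intro f
    rw [Finset.ext_iff]
    apply forall_congr'
    intro i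
    simp
  rw [← Fintype.card_subtype]
  -- build an equivalence with (Fin k ≃ ↥S) × (Fin K ≃ {x // x ∉ S})
  let Φ : ((Fin k ≃ {x : Fin (K+k) // x ∈ S}) × (Fin K ≃ {x : Fin (K+k) // x ∉ S})) →
      {f : Fin (K+k) ≃ (Fin K ⊕ Fin k) //
        Finset.univ.filter (fun i => (f i).isRight) = S} := fun ab =>
    ⟨((Equiv.sumCompl (· ∈ S)).symm.trans
        ((Equiv.sumCongr ab.1.symm ab.2.symm).trans (Equiv.sumComm (Fin k) (Fin K)))), by
      rw [hcond]
      intro i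
      by_cases hi : i ∈ S
      · simp [Equiv.sumCompl_symm_apply_of_pos hi, hi]
      · simp [Equiv.sumCompl_symm_apply_of_neg hi, hi]⟩
  have hΦval : ∀ ab, ∀ j : Fin k, ((Φ ab).1.symm (Sum.inr j) : Fin (K+k)) = (ab.1 j : Fin (K+k)) := by
    intro ab j
    simp [Φ]
  have hΦval' : ∀ ab, ∀ j : Fin K, ((Φ ab).1.symm (Sum.inl j) : Fin (K+k)) = (ab.2 j : Fin (K+k)) := by
    intro ab j
    simp [Φ]
  have hΦbij : Function.Bijective Φ := by
    constructor
    · rintro ⟨a, b⟩ ⟨a', b'⟩ h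
      have hval : (Φ (a, b)).1 = (Φ (a', b')).1 := by rw [h]
      have ha : a = a' := by
        apply Equiv.ext
        intro j
        apply Subtype.ext
        rw [← hΦval (a, b) j, ← hΦval (a', b') j, hval]
      have hb : b = b' := by
        apply Equiv.ext
        intro j
        apply Subtype.ext
        rw [← hΦval' (a, b) j, ← hΦval' (a', b') j, hval]
      rw [Prod.ext_iff]
      exact ⟨ha, hb⟩
    · rintro ⟨f, hf⟩
      rw [hcond] at hf
      have hR : ∀ j : Fin k, f.symm (Sum.inr j) ∈ S := by
        intro j
        rw [← hf]
        simp
      have hL : ∀ j : Fin K, f.symm (Sum.inl j) ∉ S := by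
        intro j
        rw [← hf]
        simp
      refine ⟨(⟨fun j => ⟨f.symm (Sum.inr j), hR j⟩,
               fun s => (f s).getRight (by rw [hf]; exact s.2),
               ?_, ?_⟩,
              ⟨fun j => ⟨f.symm (Sum.inl j), hL j⟩,
               fun s => (f s).getLeft (by
                 have := s.2
                 rw [← Sum.not_isRight, hf]
                 exact s.2),
               ?_, ?_⟩), ?_⟩
      · intro j; simp
      · intro s
        apply Subtype.ext
        simp [Sum.inr_getRight]
      · intro j; simp
      · intro s
        apply Subtype.ext
        simp [Sum.inl_getLeft]
      · apply Subtype.ext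
        apply Equiv.ext
        intro i
        by_cases hi : i ∈ S
        · have : (f i).isRight := by rw [hf]; exact hi
          simp only [Φ, Equiv.trans_apply, Equiv.sumCompl_symm_apply_of_pos hi,
            Equiv.sumCongr_apply]
          simp only [Equiv.coe_fn_symm_mk, Sum.map_inl, Equiv.sumComm_apply, Sum.swap_inl]
          exact Sum.inr_getRight _ _
        · have : (f i).isLeft := by rw [← Sum.not_isRight, hf]; exact hi
          simp only [Φ, Equiv.trans_apply, Equiv.sumCompl_symm_apply_of_neg hi,
            Equiv.sumCongr_apply]
          simp only [Equiv.coe_fn_symm_mk, Sum.map_inr, Equiv.sumComm_apply, Sum.swap_inr]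
          exact Sum.inl_getLeft _ _
  rw [← Fintype.card_congr (Equiv.ofBijective Φ hΦbij)]
  rw [Fintype.card_prod]
  have hcS : Fintype.card {x : Fin (K+k) // x ∈ S} = k := by
    rw [Fintype.card_coe, hS]
  have hcSc : Fintype.card {x : Fin (K+k) // x ∉ S} = K := by
    rw [Fintype.card_subtype_compl, hcS]
    simp
  rw [Fintype.card_equiv (Fintype.equivFinOfCardEq hcS).symm,
    Fintype.card_equiv (Fintype.equivFinOfCardEq hcSc).symm]
  simp

private lemma count_T (K k r : ℕ) (hk : 1 ≤ k) (hr1 : 1 ≤ r) (hr2 : r ≤ K + 1)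
    (mr : Fin (K+k)) (hmr : mr.val = r - 1) :
    ((Finset.univ.powersetCard k).filter
       (fun S : Finset (Fin (K+k)) => mr ∈ S ∧ ∀ x ∈ S, mr ≤ x)).card
      = (K + k - r).choose (k-1) := by
  classical
  have hbij : ((Finset.univ.powersetCard k).filter
       (fun S : Finset (Fin (K+k)) => mr ∈ S ∧ ∀ x ∈ S, mr ≤ x)).card
      = ((Finset.Ioi mr).powersetCard (k-1)).card := by
    refine Finset.card_bij' (fun S _ => S.erase mr) (fun T _ => insert mr T) ?hi ?hj ?li ?ri
    case li =>
      intro S hS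
      simp only [Finset.mem_filter] at hS
      exact Finset.insert_erase hS.2.1
    case ri =>
      intro T hT
      rw [Finset.mem_powersetCard] at hT
      have hnm : mr ∉ T := fun h => lt_irrefl mr (Finset.mem_Ioi.1 (hT.1 h))
      exact Finset.erase_insert hnm
    case hi =>
      intro S hS
      simp only [Finset.mem_filter, Finset.mem_powersetCard] at hS
      obtain ⟨⟨_, hcard⟩, hmem, hle⟩ := hS
      rw [Finset.mem_powersetCard]
      constructor
      · intro x hx
        rw [Finset.mem_erase] at hx
        rw [Finset.mem_Ioi]
        exact lt_of_le_of_ne (hle x hx.2) (Ne.symm hx.1)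
      · rw [Finset.card_erase_of_mem hmem, hcard]
    case hj =>
      intro T hT
      rw [Finset.mem_powersetCard] at hT
      obtain ⟨hsub, hcard⟩ := hT
      have hnm : mr ∉ T := fun h => lt_irrefl mr (Finset.mem_Ioi.1 (hsub h))
      simp only [Finset.mem_filter, Finset.mem_powersetCard]
      refine ⟨⟨Finset.subset_univ _, ?_⟩, Finset.mem_insert_self _ _, ?_⟩
      · rw [Finset.card_insert_of_notMem hnm, hcard]
        omega
      · intro x hx
        rcases Finset.mem_insert.1 hx with h | h
        · exact le_of_eq h.symm
        · exact le_of_lt (Finset.mem_Ioi.1 (hsub h))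
  rw [hbij, Finset.card_powersetCard, Fin.card_Ioi, hmr]
  congr 1
  omega

private lemma E_disjoint (K k : ℕ) (x : Fin K ⊕ Fin k → ℝ)
    (f g : Fin (K+k) ≃ (Fin K ⊕ Fin k))
    (hf : StrictMono fun i => x (f i)) (hg : StrictMono fun i => x (g i)) : f = g := by
  haveI : WellFoundedLT (Fin (K+k)) := inferInstance
  have hrange : Set.range (fun i => x (f i)) = Set.range (fun i => x (g i)) := by
    have h1 : Set.range (fun i => x (f i)) = Set.range x := f.surjective.range_comp x
    have h2 : Set.range (fun i => x (g i)) = Set.range x := g.surjective.range_comp x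
    rw [h1, h2]
  have heq : (fun i => x (f i)) = (fun i => x (g i)) := (hf.range_inj hg).1 hrange
  have hxinj : Function.Injective x := by
    intro a b hab
    have h1 : x (f (f.symm a)) = x (f (f.symm b)) := by
      rw [Equiv.apply_symm_apply, Equiv.apply_symm_apply]
      exact hab
    have h2 : f.symm a = f.symm b := hf.injective h1
    simpa using congrArg f h2
  apply Equiv.ext
  intro i
  exact hxinj (congrFun heq i)

private lemma E_cover (K k : ℕ) (x : Fin K ⊕ Fin k → ℝ)
    (hx : Function.Injective x) :
    ∃ f : Fin (K+k) ≃ (Fin K ⊕ Fin k), StrictMono fun i => x (f i) := by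
  classical
  let e : Fin K ⊕ Fin k ≃ Fin (K+k) := finSumFinEquiv
  let σ : Equiv.Perm (Fin (K+k)) := Tuple.sort (fun i => x (e.symm i))
  refine ⟨σ.trans e.symm, ?_⟩
  have hmono : Monotone ((fun i => x (e.symm i)) ∘ σ) := Tuple.monotone_sort _
  have hinj : Function.Injective ((fun i => x (e.symm i)) ∘ σ) :=
    (hx.comp e.symm.injective).comp σ.injective
  exact hmono.strictMono_of_injective hinj

private lemma card_below_eq (K k : ℕ) (hk : 1 ≤ k) (x : Fin K ⊕ Fin k → ℝ)
    (f : Fin (K+k) ≃ (Fin K ⊕ Fin k)) (hf : StrictMono fun i => x (f i))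
    (hne : (Finset.univ.filter fun i => (f i).isRight).Nonempty) :
    (Finset.univ.filter fun i : Fin K => x (Sum.inl i) < ⨅ j : Fin k, x (Sum.inr j)).card
      = ((Finset.univ.filter fun i => (f i).isRight).min' hne).val := by
  classical
  set S := Finset.univ.filter fun i => (f i).isRight with hSdef
  set m := S.min' hne with hmdef
  have hm : (f m).isRight := by
    have h1 : m ∈ S := S.min'_mem hne
    exact (Finset.mem_filter.1 h1).2
  obtain ⟨j₀, hj₀⟩ := Sum.isRight_iff.1 hm
  have hk' : Nonempty (Fin k) := ⟨⟨0, hk⟩⟩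
  have hinf : (⨅ j : Fin k, x (Sum.inr j)) = x (f m) := by
    apply le_antisymm
    · have := ciInf_le (Set.Finite.bddBelow (Set.finite_range (fun j : Fin k => x (Sum.inr j)))) j₀
      rw [← hj₀] at this
      exact this
    · apply le_ciInf
      intro j
      have hmem : f.symm (Sum.inr j) ∈ S := by
        apply Finset.mem_filter.2
        simp
      have hle : m ≤ f.symm (Sum.inr j) := Finset.min'_le _ _ hmem
      have := hf.monotone hle
      simpa using this
  rw [hinf]
  have hcard : (Finset.univ.filter fun i : Fin K => x (Sum.inl i) < x (f m)).card
      = (Finset.Iio m).card := by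
    apply Finset.card_bij (fun i _ => f.symm (Sum.inl i))
    · intro i hi
      rw [Finset.mem_filter] at hi
      rw [Finset.mem_Iio]
      have h1 : x (f (f.symm (Sum.inl i))) < x (f m) := by simpa using hi.2
      exact hf.lt_iff_lt.1 h1
    · intro a _ b _ h
      have := f.symm.injective h
      exact Sum.inl_injective this
    · intro p hp
      rw [Finset.mem_Iio] at hp
      have hpS : p ∉ S := by
        intro hmem
        exact absurd (Finset.min'_le _ _ hmem) (not_le.2 hp)
      have hpl : (f p).isLeft := by
        rw [← Sum.not_isRight]
        intro hR
        exact hpS (Finset.mem_filter.2 ⟨Finset.mem_univ _, hR⟩)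
      obtain ⟨i, hi⟩ := Sum.isLeft_iff.1 hpl
      refine ⟨i, ?_, ?_⟩
      · rw [Finset.mem_filter]
        refine ⟨Finset.mem_univ _, ?_⟩
        rw [← hi]
        exact hf hp
      · rw [← hi]
        simp
  rw [hcard, Fin.card_Iio]
private lemma count_Fr (K k r : ℕ) (hk : 1 ≤ k) (hr1 : 1 ≤ r) (hr2 : r ≤ K + 1)
    (mr : Fin (K+k)) (hmr : mr.val = r - 1)
    (hfiber : ∀ S : Finset (Fin (K+k)), S.card = k →
       (Finset.univ.filter (fun f : Fin (K+k) ≃ (Fin K ⊕ Fin k) =>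
         Finset.univ.filter (fun i => (f i).isRight) = S)).card
         = k.factorial * K.factorial) :
    (Finset.univ.filter (fun f : Fin (K+k) ≃ (Fin K ⊕ Fin k) =>
       (Finset.univ.filter fun i => (f i).isRight).min = (mr : WithTop (Fin (K+k))))).card
      = (K + k - r).choose (k-1) * (k.factorial * K.factorial) := by
  classical
  set T := (Finset.univ.powersetCard k).filter
       (fun S : Finset (Fin (K+k)) => mr ∈ S ∧ ∀ x ∈ S, mr ≤ x) with hTdef
  set Fr := Finset.univ.filter (fun f : Fin (K+k) ≃ (Fin K ⊕ Fin k) =>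
       (Finset.univ.filter fun i => (f i).isRight).min = (mr : WithTop (Fin (K+k)))) with hFrdef
  have hmaps : ∀ f ∈ Fr, (Finset.univ.filter fun i => (f i).isRight) ∈ T := by
    intro f hf
    rw [hFrdef, Finset.mem_filter] at hf
    have hmin := hf.2
    rw [hTdef, Finset.mem_filter, Finset.mem_powersetCard]
    refine ⟨⟨Finset.subset_univ _, posSet_card K k f⟩, Finset.mem_of_min hmin, ?_⟩
    intro x hx
    have := Finset.min_le hx
    rw [hmin] at this
    exact WithTop.coe_le_coe.1 this
  rw [Finset.card_eq_sum_card_fiberwise hmaps]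
  have hstep : ∀ S ∈ T, (Fr.filter
      (fun f => (Finset.univ.filter fun i => (f i).isRight) = S)).card
      = k.factorial * K.factorial := by
    intro S hS
    rw [hTdef, Finset.mem_filter, Finset.mem_powersetCard] at hS
    obtain ⟨⟨_, hcard⟩, hmem, hle⟩ := hS
    have hminS : S.min = (mr : WithTop (Fin (K+k))) := le_antisymm (Finset.min_le hmem)
      (Finset.le_min fun a ha => WithTop.coe_le_coe.2 (hle a ha))
    have : Fr.filter (fun f => (Finset.univ.filter fun i => (f i).isRight) = S)
        = Finset.univ.filter (fun f : Fin (K+k) ≃ (Fin K ⊕ Fin k) =>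
            Finset.univ.filter (fun i => (f i).isRight) = S) := by
      ext f
      simp only [hFrdef, Finset.mem_filter, Finset.mem_univ, true_and]
      constructor
      · exact fun h => h.2
      · intro h
        exact ⟨by rw [h]; exact hminS, h⟩
    rw [this]
    exact hfiber S hcard
  rw [Finset.sum_congr rfl hstep, Finset.sum_const, smul_eq_mul]
  congr 1
  exact count_T K k r hk hr1 hr2 mr hmr

/-- for exchangeable, almost surely pairwise distinct random variables
`X_1, …, X_{K+k}` (with `k ≥ 1`), and any `r ∈ {1, …, K+1}`, the probability that exactly
`r-1` of `X_1, …, X_K` are strictly smaller than `min{X_{K+1}, …, X_{K+k}}` equals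
`C(K+k-r, k-1) / C(K+k, k)`. -/
theorem statement12
    {Ω : Type*} [MeasurableSpace Ω] (P : Measure Ω) [IsProbabilityMeasure P]
    (K k : ℕ) (hk : 1 ≤ k)
    (X : Fin K ⊕ Fin k → Ω → ℝ)
    (hmeas : ∀ a, Measurable (X a))
    (hexch : ∀ σ : Equiv.Perm (Fin K ⊕ Fin k),
      P.map (fun ω => fun a => X (σ a) ω) = P.map (fun ω => fun a => X a ω))
    (hdist : ∀ᵐ ω ∂P, ∀ a b, a ≠ b → X a ω ≠ X b ω)
    (r : ℕ) (hr1 : 1 ≤ r) (hr2 : r ≤ K + 1) :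
    P {ω | (Finset.univ.filter fun i : Fin K =>
        X (Sum.inl i) ω < ⨅ j : Fin k, X (Sum.inr j) ω).card = r - 1} =
      ENNReal.ofReal (((K + k - r).choose (k - 1) : ℝ) / ((K + k).choose k : ℝ)) := by
  classical
  have hNK : r - 1 < K + k := by omega
  set mr : Fin (K+k) := ⟨r-1, hNK⟩ with hmrdef
  set E : (Fin (K+k) ≃ (Fin K ⊕ Fin k)) → Set Ω :=
    fun f => {ω | StrictMono fun i => X (f i) ω} with hEdef
  have hEmem : ∀ f ω, ω ∈ E f ↔ StrictMono fun i => X (f i) ω := fun f ω => Iff.rfl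
  have hEmeas : ∀ f, MeasurableSet (E f) := by
    intro f
    have h : E f = ⋂ (p : Fin (K+k) × Fin (K+k)) (_ : p.1 < p.2),
        {ω | X (f p.1) ω < X (f p.2) ω} := by
      ext ω
      simp only [hEdef, Set.mem_setOf_eq, Set.mem_iInter]
      exact ⟨fun h p hp => h hp, fun h a b hab => h (a, b) hab⟩
    rw [h]
    exact MeasurableSet.iInter fun p => MeasurableSet.iInter fun _ =>
      measurableSet_lt (hmeas _) (hmeas _)
  have hXm : Measurable (fun ω => fun a => X a ω) := measurable_pi_lambda _ hmeas
  set μ := P.map (fun ω => fun a => X a ω) with hμdef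
  have hSmeas : ∀ f : Fin (K+k) ≃ (Fin K ⊕ Fin k),
      MeasurableSet {x : (Fin K ⊕ Fin k) → ℝ | StrictMono fun i => x (f i)} := by
    intro f
    have h : {x : (Fin K ⊕ Fin k) → ℝ | StrictMono fun i => x (f i)}
        = ⋂ (p : Fin (K+k) × Fin (K+k)) (_ : p.1 < p.2),
          {x : (Fin K ⊕ Fin k) → ℝ | x (f p.1) < x (f p.2)} := by
      ext x
      simp only [Set.mem_setOf_eq, Set.mem_iInter]
      exact ⟨fun h p hp => h hp, fun h a b hab => h (a, b) hab⟩
    rw [h]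
    exact MeasurableSet.iInter fun p => MeasurableSet.iInter fun _ =>
      measurableSet_lt (measurable_pi_apply _) (measurable_pi_apply _)
  have hEP : ∀ f, P (E f) = μ {x | StrictMono fun i => x (f i)} := by
    intro f
    rw [hμdef, Measure.map_apply hXm (hSmeas f)]
    rfl
  have hμperm : ∀ σ : Equiv.Perm (Fin K ⊕ Fin k),
      μ.map (fun x (a : Fin K ⊕ Fin k) => x (σ a)) = μ := by
    intro σ
    rw [hμdef, Measure.map_map (measurable_pi_lambda _ fun a => measurable_pi_apply (σ a)) hXm]
    exact hexch σ
  have hEeq : ∀ f g, P (E f) = P (E g) := by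
    intro f g
    rw [hEP f, hEP g]
    have hpre : (fun (x : (Fin K ⊕ Fin k) → ℝ) (a : Fin K ⊕ Fin k) => x ((g.symm.trans f) a)) ⁻¹'
        {x | StrictMono fun i => x (g i)} = {x | StrictMono fun i => x (f i)} := by
      ext x
      simp only [Set.mem_preimage, Set.mem_setOf_eq, Equiv.trans_apply, Equiv.symm_apply_apply]
    rw [← hpre, ← Measure.map_apply (measurable_pi_lambda _ fun a => measurable_pi_apply _)
      (hSmeas g), hμperm]
  have hdisj : Pairwise (Function.onFun Disjoint E) := by
    intro f g hfg
    rw [Function.onFun, Set.disjoint_left]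
    intro ω hfω hgω
    exact hfg (E_disjoint K k (fun a => X a ω) f g hfω hgω)
  have hUmeas : MeasurableSet (⋃ f, E f) := MeasurableSet.iUnion hEmeas
  have hUc : P (⋃ f, E f)ᶜ = 0 := by
    have hae : ∀ᵐ ω ∂P, ω ∈ ⋃ f, E f := by
      filter_upwards [hdist] with ω hω
      have hinj : Function.Injective (fun a => X a ω) := by
        intro a b hab
        by_contra h
        exact hω a b h hab
      obtain ⟨f, hf⟩ := E_cover K k (fun a => X a ω) hinj
      exact Set.mem_iUnion.2 ⟨f, hf⟩
    have := ae_iff.1 hae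
    simpa [Set.compl_def] using this
  have hU : P (⋃ f, E f) = 1 := by
    have h := measure_add_measure_compl (μ := P) hUmeas
    rw [hUc, add_zero, measure_univ] at h
    exact h
  have hsum : ∑ f : (Fin (K+k) ≃ (Fin K ⊕ Fin k)), P (E f) = 1 := by
    rw [← tsum_fintype (L := .unconditional _), ← measure_iUnion hdisj hEmeas]
    exact hU
  have hcardEquiv : Fintype.card (Fin (K+k) ≃ (Fin K ⊕ Fin k)) = (K+k).factorial := by
    rw [Fintype.card_equiv finSumFinEquiv.symm]
    simp
  have hPEf : ∀ f, P (E f) = ((K+k).factorial : ENNReal)⁻¹ := by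
    intro f
    have h1 : ∑ g : (Fin (K+k) ≃ (Fin K ⊕ Fin k)), P (E g)
        = ((K+k).factorial : ENNReal) * P (E f) := by
      rw [Finset.sum_congr rfl fun g _ => hEeq g f, Finset.sum_const, nsmul_eq_mul,
        Finset.card_univ, hcardEquiv]
    rw [h1] at hsum
    have h2 := ENNReal.eq_inv_of_mul_eq_one_left hsum
    rw [← inv_inv (P (E f)), ← h2]
  -- identification of the target event on each E f
  have hAE : ∀ f : Fin (K+k) ≃ (Fin K ⊕ Fin k),
      {ω | (Finset.univ.filter fun i : Fin K =>
          X (Sum.inl i) ω < ⨅ j : Fin k, X (Sum.inr j) ω).card = r - 1} ∩ E f =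
      (if (Finset.univ.filter fun i => (f i).isRight).min = (mr : WithTop (Fin (K+k)))
       then E f else (∅ : Set Ω)) := by
    intro f
    have hne : (Finset.univ.filter fun i => (f i).isRight).Nonempty :=
      ⟨f.symm (Sum.inr ⟨0, hk⟩), Finset.mem_filter.2 ⟨Finset.mem_univ _, by simp⟩⟩
    by_cases hcond : (Finset.univ.filter fun i => (f i).isRight).min
        = (mr : WithTop (Fin (K+k)))
    · rw [if_pos hcond]
      apply Set.inter_eq_right.2
      intro ω hω
      have hcb := card_below_eq K k hk (fun a => X a ω) f hω hne
      have hmin' : (Finset.univ.filter fun i => (f i).isRight).min' hne = mr := by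
        have := Finset.coe_min' hne
        rw [hcond] at this
        exact WithTop.coe_inj.1 this
      rw [Set.mem_setOf_eq, hcb, hmin']
    · rw [if_neg hcond]
      ext ω
      simp only [Set.mem_inter_iff, Set.mem_setOf_eq, Set.mem_empty_iff_false, iff_false,
        not_and]
      intro hA hω
      apply hcond
      have hcb := card_below_eq K k hk (fun a => X a ω) f hω hne
      have hmin' : (Finset.univ.filter fun i => (f i).isRight).min' hne = mr := by
        apply Fin.ext
        rw [← hcb]
        exact hA
      rw [← Finset.coe_min' hne, hmin']
  -- compute the probability
  set A : Set Ω := {ω | (Finset.univ.filter fun i : Fin K =>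
      X (Sum.inl i) ω < ⨅ j : Fin k, X (Sum.inr j) ω).card = r - 1} with hAdef
  have hAU : P A = P (A ∩ ⋃ f, E f) := by
    apply le_antisymm
    · calc P A ≤ P ((A ∩ ⋃ f, E f) ∪ (⋃ f, E f)ᶜ) := by
            apply measure_mono
            intro ω hω
            by_cases h : ω ∈ ⋃ f, E f
            · exact Or.inl ⟨hω, h⟩
            · exact Or.inr h
        _ ≤ P (A ∩ ⋃ f, E f) + P (⋃ f, E f)ᶜ := measure_union_le _ _
        _ = P (A ∩ ⋃ f, E f) := by rw [hUc, add_zero]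
    · exact measure_mono Set.inter_subset_left
  have hAUeq : A ∩ (⋃ f, E f) = ⋃ f, (if (Finset.univ.filter fun i => (f i).isRight).min
      = (mr : WithTop (Fin (K+k))) then E f else (∅ : Set Ω)) := by
    rw [Set.inter_iUnion]
    exact Set.iUnion_congr hAE
  have hPAU : P A = ∑ f : Fin (K+k) ≃ (Fin K ⊕ Fin k),
      (if (Finset.univ.filter fun i => (f i).isRight).min = (mr : WithTop (Fin (K+k)))
       then P (E f) else 0) := by
    have hdisj2 : Pairwise (Function.onFun Disjoint
        (fun f : Fin (K+k) ≃ (Fin K ⊕ Fin k) =>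
          if (Finset.univ.filter fun i => (f i).isRight).min = (mr : WithTop (Fin (K+k)))
          then E f else (∅ : Set Ω))) := by
      intro f g hfg
      refine (hdisj hfg).mono ?_ ?_
      · dsimp only
        split_ifs
        · exact le_refl _
        · exact Set.empty_subset _
      · dsimp only
        split_ifs
        · exact le_refl _
        · exact Set.empty_subset _
    have hmeas2 : ∀ f : Fin (K+k) ≃ (Fin K ⊕ Fin k), MeasurableSet
        (if (Finset.univ.filter fun i => (f i).isRight).min = (mr : WithTop (Fin (K+k)))
         then E f else (∅ : Set Ω)) := by
      intro f
      split_ifs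
      · exact hEmeas f
      · exact MeasurableSet.empty
    rw [hAU, hAUeq, measure_iUnion hdisj2 hmeas2, tsum_fintype]
    apply Finset.sum_congr rfl
    intro f _
    split_ifs
    · rfl
    · exact measure_empty
  have hcount : (Finset.univ.filter (fun f : Fin (K+k) ≃ (Fin K ⊕ Fin k) =>
       (Finset.univ.filter fun i => (f i).isRight).min = (mr : WithTop (Fin (K+k))))).card
      = (K + k - r).choose (k-1) * (k.factorial * K.factorial) :=
    count_Fr K k r hk hr1 hr2 mr rfl (fun S hS => fiber_card K k S hS)
  have hPA : P A = (((K + k - r).choose (k-1) * (k.factorial * K.factorial) : ℕ) : ENNReal)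
      * ((K+k).factorial : ENNReal)⁻¹ := by
    rw [hPAU]
    have : ∀ f : Fin (K+k) ≃ (Fin K ⊕ Fin k),
        (if (Finset.univ.filter fun i => (f i).isRight).min = (mr : WithTop (Fin (K+k)))
         then P (E f) else 0)
        = (if (Finset.univ.filter fun i => (f i).isRight).min = (mr : WithTop (Fin (K+k)))
           then ((K+k).factorial : ENNReal)⁻¹ else 0) := by
      intro f
      split_ifs
      · exact hPEf f
      · rfl
    rw [Finset.sum_congr rfl fun f _ => this f, Finset.sum_ite, Finset.sum_const,
      Finset.sum_const_zero, add_zero, hcount, nsmul_eq_mul]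
  rw [hPA]
  -- final arithmetic
  have hkle : k ≤ K + k := by omega
  have hC0 : ((K + k).choose k : ENNReal) ≠ 0 := by
    have := Nat.choose_pos hkle
    simp only [ne_eq, Nat.cast_eq_zero]
    omega
  have hCtop : ((K + k).choose k : ENNReal) ≠ ⊤ := ENNReal.natCast_ne_top _
  have hm0 : ((k.factorial * K.factorial : ℕ) : ENNReal) ≠ 0 := by
    simp [Nat.factorial_ne_zero]
  have hmtop : ((k.factorial * K.factorial : ℕ) : ENNReal) ≠ ⊤ := ENNReal.natCast_ne_top _
  have hNfac : (K + k).factorial = (K + k).choose k * (k.factorial * K.factorial) := by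
    have h := Nat.choose_mul_factorial_mul_factorial hkle
    rw [Nat.add_sub_cancel] at h
    rw [← h]
    ring
  have hRHS : ENNReal.ofReal (((K + k - r).choose (k - 1) : ℝ) / ((K + k).choose k : ℝ))
      = ((K + k - r).choose (k - 1) : ENNReal) * (((K + k).choose k : ENNReal))⁻¹ := by
    rw [ENNReal.ofReal_div_of_pos (by exact_mod_cast Nat.choose_pos hkle),
      ENNReal.ofReal_natCast, ENNReal.ofReal_natCast, div_eq_mul_inv]
  rw [hRHS, hNfac]
  push_cast
  rw [ENNReal.mul_inv (Or.inl hC0) (Or.inl hCtop)]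
  calc ((K + k - r).choose (k - 1) : ENNReal) * ((k.factorial : ENNReal) * (K.factorial : ENNReal))
        * ((((K + k).choose k : ENNReal))⁻¹ * (((k.factorial : ENNReal) * (K.factorial : ENNReal)))⁻¹)
      = ((K + k - r).choose (k - 1) : ENNReal) * (((K + k).choose k : ENNReal))⁻¹
        * (((k.factorial : ENNReal) * (K.factorial : ENNReal))
          * (((k.factorial : ENNReal) * (K.factorial : ENNReal)))⁻¹) := by ring
    _ = ((K + k - r).choose (k - 1) : ENNReal) * (((K + k).choose k : ENNReal))⁻¹ := by
        rw [ENNReal.mul_inv_cancel (by push_cast at hm0 ⊢; exact hm0)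
          (by push_cast at hmtop ⊢; exact hmtop), mul_one]
end

section
/- Let m ∈ ℕ and let f : [0,1] → ℝ be such that its derivatives d^k f/dt^k exist and are continuous on [0,1] for all 0 ≤ k ≤ m. Define g(t) = (∫_t^1 f(u) du)/(1−t) for t ∈ [0,1). Then, for every 0 ≤ k ≤ m and every t ∈ [0,1), the k-th derivative of g exists and equals d^k g/dt^k (t) = (k!/(1−t)^{k+1}) · ∫_t^1 ∫_t^{t_1} ⋯ ∫_t^{t_k} f^{(k)}(t_{k+1}) dt_{k+1} ⋯ dt_2 dt_1. -/
set_option autoImplicit false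

open MeasureTheory intervalIntegral

/-- `nestedInt h t k x` is the `k`-fold iterated integral
`∫_t^x ∫_t^{u_1} ⋯ ∫_t^{u_{k-1}} h(u_k) du_k ⋯ du_1`. -/
noncomputable def nestedInt (h : ℝ → ℝ) (t : ℝ) : ℕ → ℝ → ℝ
  | 0 => h
  | k + 1 => fun x => ∫ u in t..x, nestedInt h t k u

lemma hasDerivAt_primitive {F : ℝ → ℝ} (hF : Continuous F) (a x : ℝ) :
    HasDerivAt (fun u => ∫ s in a..u, F s) (F x) x :=
  intervalIntegral.integral_hasDerivAt_right (hF.intervalIntegrable a x)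
    (hF.stronglyMeasurable.stronglyMeasurableAtFilter) hF.continuousAt

lemma nestedInt_continuous {h : ℝ → ℝ} (hh : Continuous h) (t : ℝ) :
    ∀ k, Continuous (nestedInt h t k)
  | 0 => hh
  | k + 1 => intervalIntegral.continuous_primitive
      (fun a b => (nestedInt_continuous hh t k).intervalIntegrable a b) t

lemma nestedInt_hasDerivAt {h : ℝ → ℝ} (hh : Continuous h) (t : ℝ) (k : ℕ) (x : ℝ) :
    HasDerivAt (nestedInt h t (k + 1)) (nestedInt h t k x) x :=
  hasDerivAt_primitive (nestedInt_continuous hh t k) t x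

lemma expand {h : ℝ → ℝ} (hh : Continuous h) (t x : ℝ) (n : ℕ) :
    (∫ s in t..x, (x - s) ^ n * h s)
      = ∑ i ∈ Finset.range (n + 1),
          (n.choose i : ℝ) * x ^ i * ∫ s in t..x, (-s) ^ (n - i) * h s := by
  have hpt : ∀ s : ℝ, (x - s) ^ n * h s
      = ∑ i ∈ Finset.range (n + 1), (n.choose i : ℝ) * x ^ i * ((-s) ^ (n - i) * h s) := by
    intro s
    rw [sub_eq_add_neg, add_pow, Finset.sum_mul]
    exact Finset.sum_congr rfl fun i _ => by ring
  calc (∫ s in t..x, (x - s) ^ n * h s)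
      = ∫ s in t..x, ∑ i ∈ Finset.range (n + 1),
          (n.choose i : ℝ) * x ^ i * ((-s) ^ (n - i) * h s) :=
        intervalIntegral.integral_congr (fun s _ => hpt s)
    _ = ∑ i ∈ Finset.range (n + 1), ∫ s in t..x,
          (n.choose i : ℝ) * x ^ i * ((-s) ^ (n - i) * h s) := by
        refine intervalIntegral.integral_finset_sum (fun i _ => ?_)
        exact (Continuous.intervalIntegrable (by fun_prop) t x)
    _ = ∑ i ∈ Finset.range (n + 1),
          (n.choose i : ℝ) * x ^ i * ∫ s in t..x, (-s) ^ (n - i) * h s := by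
        refine Finset.sum_congr rfl fun i _ => ?_
        rw [intervalIntegral.integral_const_mul]

lemma hasDerivAt_cpow {h : ℝ → ℝ} (hh : Continuous h) (t x : ℝ) (n : ℕ) :
    HasDerivAt (fun y => ∫ s in t..y, (y - s) ^ (n + 1) * h s)
      ((n + 1 : ℝ) * ∫ s in t..x, (x - s) ^ n * h s) x := by
  set T : ℕ → ℝ → ℝ := fun j y => ∫ s in t..y, (-s) ^ j * h s with hT
  have hfun : (fun y => ∫ s in t..y, (y - s) ^ (n + 1) * h s)
      = fun y => ∑ i ∈ Finset.range (n + 2),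
          (Nat.choose (n + 1) i : ℝ) * y ^ i * T (n + 1 - i) y :=
    funext fun y => expand hh t y (n + 1)
  rw [hfun]
  have hterm : ∀ i ∈ Finset.range (n + 2),
      HasDerivAt (fun y => (Nat.choose (n + 1) i : ℝ) * y ^ i * T (n + 1 - i) y)
        ((Nat.choose (n + 1) i : ℝ) *
          ((i : ℝ) * x ^ (i - 1) * T (n + 1 - i) x + x ^ i * ((-x) ^ (n + 1 - i) * h x))) x := by
    intro i _
    have hTd : HasDerivAt (T (n + 1 - i)) ((-x) ^ (n + 1 - i) * h x) x :=
      hasDerivAt_primitive (by fun_prop) t x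
    have := ((hasDerivAt_pow i x).mul hTd).const_mul ((Nat.choose (n + 1) i : ℝ))
    convert this using 2 <;> first | rfl | (simp only [Pi.mul_apply]; ring)
  have hsum := HasDerivAt.fun_sum hterm
  refine hsum.congr_deriv ?_
  symm
  -- algebra
  rw [expand hh t x n, Finset.mul_sum]
  have split : ∀ i ∈ Finset.range (n + 2),
      (((n+1).choose i : ℝ)) * ((i : ℝ) * x ^ (i - 1) * T (n + 1 - i) x + x ^ i * ((-x) ^ (n + 1 - i) * h x))
        = (((n+1).choose i : ℝ)) * ((i : ℝ) * x ^ (i - 1) * T (n + 1 - i) x)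
          + (((n+1).choose i : ℝ)) * (x ^ i * ((-x) ^ (n + 1 - i) * h x)) :=
    fun i _ => mul_add _ _ _
  rw [Finset.sum_congr rfl split, Finset.sum_add_distrib]
  have hB : (∑ i ∈ Finset.range (n + 2),
      (((n+1).choose i : ℝ)) * (x ^ i * ((-x) ^ (n + 1 - i) * h x))) = 0 := by
    have : (∑ i ∈ Finset.range (n + 2),
        (((n+1).choose i : ℝ)) * (x ^ i * ((-x) ^ (n + 1 - i) * h x)))
        = (x + -x) ^ (n + 1) * h x := by
      rw [add_pow, Finset.sum_mul]
      exact Finset.sum_congr rfl fun i _ => by ring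
    rw [this]
    simp
  rw [hB, add_zero]
  have hA : (∑ i ∈ Finset.range (n + 2),
        (((n+1).choose i : ℝ)) * ((i : ℝ) * x ^ (i - 1) * T (n + 1 - i) x))
      = ∑ i ∈ Finset.range (n + 1), ((n : ℝ) + 1) * ((n.choose i : ℝ) * x ^ i * T (n - i) x) := by
    rw [Finset.sum_range_succ']
    have hzero : (((n+1).choose 0 : ℝ)) * ((0:ℕ) * x ^ (0 - 1) * T (n + 1 - 0) x) = 0 := by
      norm_num
    rw [hzero, add_zero]
    refine Finset.sum_congr rfl fun i hi => ?_
    have h2 : n + 1 - (i + 1) = n - i := by omega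
    have h3 : ((n+1).choose (i+1) : ℝ) * ((i : ℝ) + 1) = ((n : ℝ) + 1) * (n.choose i : ℝ) := by
      have h4 : ((n.succ * n.choose i : ℕ) : ℝ) = ((n.succ.choose i.succ * i.succ : ℕ) : ℝ) := by
        exact_mod_cast congrArg (Nat.cast (R := ℝ)) (Nat.add_one_mul_choose_eq n i)
      push_cast [Nat.succ_eq_add_one] at h4
      linear_combination -h4
    rw [h2, show i + 1 - 1 = i from rfl]
    push_cast
    linear_combination (x ^ i * T (n - i) x) * h3
  rw [hA]

lemma nestedInt_eq {h : ℝ → ℝ} (hh : Continuous h) (t : ℝ) :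
    ∀ (k : ℕ) (x : ℝ),
      nestedInt h t (k + 1) x = (∫ s in t..x, (x - s) ^ k * h s) / (k.factorial : ℝ) := by
  intro k
  induction k with
  | zero =>
    intro x
    show (∫ u in t..x, h u) = (∫ s in t..x, (x - s) ^ 0 * h s) / (Nat.factorial 0 : ℝ)
    rw [intervalIntegral.integral_congr (g := h) (fun s _ => by simp)]
    simp
  | succ k ih =>
    intro x
    set A : ℝ → ℝ := nestedInt h t (k + 2) with hA
    set B : ℝ → ℝ := fun x => (∫ s in t..x, (x - s) ^ (k + 1) * h s) / ((k+1).factorial : ℝ)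
      with hBdef
    have hAd : ∀ y, HasDerivAt A (nestedInt h t (k + 1) y) y :=
      fun y => nestedInt_hasDerivAt hh t (k + 1) y
    have hBd : ∀ y, HasDerivAt B (nestedInt h t (k + 1) y) y := by
      intro y
      have := (hasDerivAt_cpow hh t y k).div_const ((k+1).factorial : ℝ)
      have heq : ((k : ℝ) + 1) * (∫ s in t..y, (y - s) ^ k * h s) / ((k+1).factorial : ℝ)
          = nestedInt h t (k + 1) y := by
        rw [ih y, Nat.factorial_succ]
        have h1 : (k.factorial : ℝ) ≠ 0 := Nat.cast_ne_zero.mpr k.factorial_ne_zero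
        field_simp
        push_cast
        ring
      rw [← heq]
      exact this
    have hconst : ∀ y, A y - B y = A t - B t := by
      intro y
      have hdiff : ∀ z, HasDerivAt (fun w => A w - B w) 0 z := by
        intro z
        simpa using (hAd z).fun_sub (hBd z)
      exact is_const_of_deriv_eq_zero (fun z => (hdiff z).differentiableAt)
        (fun z => (hdiff z).deriv) y t
    have hAt : A t = 0 := by
      show (∫ u in t..t, nestedInt h t (k + 1) u) = 0
      exact intervalIntegral.integral_same
    have hBt : B t = 0 := by
      show (∫ s in t..t, (t - s) ^ (k + 1) * h s) / ((k+1).factorial : ℝ) = 0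
      rw [intervalIntegral.integral_same, zero_div]
    have := hconst x
    rw [hAt, hBt] at this
    have : A x = B x := by linarith
    exact this

lemma nestedInt_congr {h h' : ℝ → ℝ} {t b : ℝ} (heq : Set.EqOn h h' (Set.Icc t b)) :
    ∀ (k : ℕ) ⦃x : ℝ⦄, x ∈ Set.Icc t b → nestedInt h t k x = nestedInt h' t k x
  | 0, x, hx => heq hx
  | k + 1, x, hx => by
    show (∫ u in t..x, nestedInt h t k u) = ∫ u in t..x, nestedInt h' t k u
    refine intervalIntegral.integral_congr fun u hu => ?_
    have hu' : u ∈ Set.Icc t b := by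
      rw [Set.uIcc_of_le hx.1] at hu
      exact ⟨hu.1, hu.2.trans hx.2⟩
    exact nestedInt_congr heq k hu'

lemma exists_ext {φ : ℝ → ℝ} (hφ : ContinuousOn φ (Set.Icc 0 1)) :
    ∃ ψ : ℝ → ℝ, Continuous ψ ∧ Set.EqOn φ ψ (Set.Icc 0 1) := by
  refine ⟨φ ∘ (fun x => max 0 (min 1 x)), hφ.comp_continuous (by fun_prop) fun x => ?_, fun x hx => ?_⟩
  · exact ⟨le_max_left _ _, max_le (by norm_num) (min_le_left _ _)⟩
  · simp only [Function.comp_apply, min_eq_right hx.2, max_eq_right hx.1]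

/-- Lemma 2: if the derivatives of `f` up to order `m` exist and are
continuous on `[0,1]`, then `g(t) = (∫_t^1 f)/(1-t)` is `m` times differentiable on `[0,1)`
and, for `0 ≤ k ≤ m`,
`g^{(k)}(t) = (k!/(1-t)^{k+1}) ∫_t^1 ∫_t^{t_1} ⋯ ∫_t^{t_k} f^{(k)}(t_{k+1}) dt_{k+1} ⋯ dt_1`. -/
theorem statement14
    (m : ℕ) (f : ℝ → ℝ)
    (hf : ContDiffOn ℝ m f (Set.Icc 0 1))
    (g : ℝ → ℝ)
    (hg : ∀ t, g t = (∫ u in t..(1 : ℝ), f u) / (1 - t)) :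
    ContDiffOn ℝ m g (Set.Ico 0 1) ∧
    ∀ k : ℕ, k ≤ m → ∀ t ∈ Set.Ico (0 : ℝ) 1,
      iteratedDerivWithin k g (Set.Ico 0 1) t =
        (k.factorial : ℝ) / (1 - t) ^ (k + 1) *
          nestedInt (iteratedDerivWithin k f (Set.Icc 0 1)) t (k + 1) 1 := by
  have hIu : UniqueDiffOn ℝ (Set.Icc (0:ℝ) 1) := uniqueDiffOn_Icc (by norm_num)
  have hSu : UniqueDiffOn ℝ (Set.Ico (0:ℝ) 1) := uniqueDiffOn_Ico 0 1
  have hFcont : ∀ k, k ≤ m →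
      ContinuousOn (iteratedDerivWithin k f (Set.Icc 0 1)) (Set.Icc 0 1) :=
    fun k hk => hf.continuousOn_iteratedDerivWithin (by exact_mod_cast hk) hIu
  have hExt : ∀ k : ℕ, ∃ ψ : ℝ → ℝ, (k ≤ m → Continuous ψ) ∧
      Set.EqOn (iteratedDerivWithin k f (Set.Icc 0 1)) ψ (Set.Icc 0 1) := by
    intro k
    by_cases hk : k ≤ m
    · obtain ⟨ψ, h1, h2⟩ := exists_ext (hFcont k hk)
      exact ⟨ψ, fun _ => h1, h2⟩
    · exact ⟨_, fun h => absurd h hk, Set.eqOn_refl _ _⟩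
  choose H hHc hHe using hExt
  set Ghat : ℕ → ℝ → ℝ :=
    fun k t => (∫ s in t..1, (1 - s) ^ k * H k s) / (1 - t) ^ (k + 1) with hGhat
  -- (i) relation between RHS of the statement and Ghat
  have hRG : ∀ k, k ≤ m → ∀ t ∈ Set.Ico (0:ℝ) 1,
      (k.factorial : ℝ) / (1 - t) ^ (k + 1) *
        nestedInt (iteratedDerivWithin k f (Set.Icc 0 1)) t (k + 1) 1 = Ghat k t := by
    intro k hk t ht
    have h1t : t ≤ 1 := le_of_lt ht.2
    have hsub : Set.Icc t 1 ⊆ Set.Icc (0:ℝ) 1 := Set.Icc_subset_Icc ht.1 le_rfl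
    have e1 : nestedInt (iteratedDerivWithin k f (Set.Icc 0 1)) t (k + 1) 1
        = nestedInt (H k) t (k + 1) 1 :=
      nestedInt_congr (fun x hx => hHe k (hsub hx)) (k + 1) (Set.right_mem_Icc.mpr h1t)
    rw [e1, nestedInt_eq (hHc k hk) t k 1]
    have hfac : (k.factorial : ℝ) ≠ 0 := Nat.cast_ne_zero.mpr k.factorial_ne_zero
    have hne : (1:ℝ) - t ≠ 0 := sub_ne_zero.mpr (ne_of_gt ht.2)
    show _ = (∫ s in t..1, (1 - s) ^ k * H k s) / (1 - t) ^ (k + 1)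
    field_simp
  -- numerator derivative
  have hNum : ∀ k, k ≤ m → ∀ t : ℝ,
      HasDerivAt (fun y => ∫ s in y..1, (1 - s) ^ k * H k s) (-((1 - t) ^ k * H k t)) t := by
    intro k hk t
    have hcont : Continuous fun s : ℝ => (1 - s) ^ k * H k s :=
      ((continuous_const.sub continuous_id).pow k).mul (hHc k hk)
    have h1 := (hasDerivAt_primitive hcont 1 t).neg
    have heq : (fun y => ∫ s in y..1, (1 - s) ^ k * H k s)
        = fun y => -(∫ s in (1:ℝ)..y, (1 - s) ^ k * H k s) :=
      funext fun y => intervalIntegral.integral_symm 1 y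
    rw [heq]
    exact h1
  have hDen : ∀ (k : ℕ) (t : ℝ),
      HasDerivAt (fun y : ℝ => (1 - y) ^ (k + 1)) (-(((k:ℝ) + 1) * (1 - t) ^ k)) t := by
    intro k t
    have h0 : HasDerivAt (fun y : ℝ => 1 - y) (-1) t := (hasDerivAt_id t).const_sub 1
    have := h0.pow (k + 1)
    refine this.congr_deriv ?_
    symm
    push_cast
    ring_nf
  have hQ : ∀ k, k ≤ m → ∀ t : ℝ, t < 1 → HasDerivAt (Ghat k)
      ((-((1 - t) ^ k * H k t) * (1 - t) ^ (k + 1) -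
        (∫ s in t..1, (1 - s) ^ k * H k s) * -(((k:ℝ) + 1) * (1 - t) ^ k)) /
          ((1 - t) ^ (k + 1)) ^ 2) t := by
    intro k hk t ht
    have hne : (1 - t) ^ (k+1) ≠ 0 := pow_ne_zero _ (sub_ne_zero.mpr (ne_of_gt (lt_of_lt_of_le ht le_rfl)))
    exact (hNum k hk t).div (hDen k t) hne
  -- integration by parts
  have hIBP : ∀ k, k + 1 ≤ m → ∀ t ∈ Set.Ico (0:ℝ) 1,
      (∫ s in t..1, (1 - s) ^ (k + 1) * H (k + 1) s)
        = ((k:ℝ) + 1) * (∫ s in t..1, (1 - s) ^ k * H k s) - (1 - t) ^ (k + 1) * H k t := by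
    intro k hk t ht
    have hk' : k ≤ m := Nat.le_of_succ_le hk
    have h1t : t ≤ 1 := le_of_lt ht.2
    have hsub : Set.Icc t 1 ⊆ Set.Icc (0:ℝ) 1 := Set.Icc_subset_Icc ht.1 le_rfl
    have huIcc : Set.uIcc t 1 = Set.Icc t 1 := Set.uIcc_of_le h1t
    have e1 : (∫ s in t..1, (1 - s) ^ (k + 1) * H (k + 1) s)
        = ∫ s in t..1, (1 - s) ^ (k + 1) * iteratedDerivWithin (k + 1) f (Set.Icc 0 1) s :=
      intervalIntegral.integral_congr fun s hs => by
        rw [← hHe (k + 1) (hsub (huIcc ▸ hs))]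
    have e2 : (∫ s in t..1, (1 - s) ^ k * H k s)
        = ∫ s in t..1, (1 - s) ^ k * iteratedDerivWithin k f (Set.Icc 0 1) s :=
      intervalIntegral.integral_congr fun s hs => by
        rw [← hHe k (hsub (huIcc ▸ hs))]
    rw [e1, e2, ← hHe k (hsub (Set.left_mem_Icc.mpr h1t))]
    set F := iteratedDerivWithin k f (Set.Icc 0 1) with hFdef
    set F' := iteratedDerivWithin (k + 1) f (Set.Icc 0 1) with hF'def
    have hFd : ∀ x ∈ Set.Ioo t 1, HasDerivAt F (F' x) x := by
      intro x hx
      have hxI : x ∈ Set.Icc (0:ℝ) 1 := ⟨le_of_lt (lt_of_le_of_lt ht.1 hx.1), le_of_lt hx.2⟩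
      have hdiff : DifferentiableOn ℝ F (Set.Icc 0 1) :=
        hf.differentiableOn_iteratedDerivWithin (by exact_mod_cast Nat.lt_of_succ_le hk) hIu
      have h1 : HasDerivWithinAt F (derivWithin F (Set.Icc 0 1) x) (Set.Icc 0 1) x :=
        (hdiff x hxI).hasDerivWithinAt
      have h2 : derivWithin F (Set.Icc 0 1) x = F' x := (congrFun iteratedDerivWithin_succ x).symm
      rw [h2] at h1
      exact h1.hasDerivAt (Icc_mem_nhds (lt_of_le_of_lt ht.1 hx.1) hx.2)
    have hphi : ∀ x ∈ Set.Ioo t 1, HasDerivWithinAt (fun s => (1 - s) ^ (k + 1) * F s)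
        ((1 - x) ^ (k + 1) * F' x - ((k:ℝ) + 1) * ((1 - x) ^ k * F x)) (Set.Ioi x) x := by
      intro x hx
      have h3 := (hDen k x).mul (hFd x hx)
      have h4 : -(((k:ℝ) + 1) * (1 - x) ^ k) * F x + (1 - x) ^ (k + 1) * F' x
          = (1 - x) ^ (k + 1) * F' x - ((k:ℝ) + 1) * ((1 - x) ^ k * F x) := by ring
      rw [h4] at h3
      exact h3.hasDerivWithinAt
    have hcontphi : ContinuousOn (fun s => (1 - s) ^ (k + 1) * F s) (Set.Icc t 1) :=
      (ContinuousOn.mul ((continuous_const.sub continuous_id).pow (k + 1)).continuousOn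
        ((hFcont k hk').mono hsub))
    have hcF : ContinuousOn F (Set.Icc t 1) := (hFcont k hk').mono hsub
    have hcF' : ContinuousOn F' (Set.Icc t 1) := (hFcont (k + 1) hk).mono hsub
    have hint1 : IntervalIntegrable (fun s => (1 - s) ^ (k + 1) * F' s) volume t 1 := by
      apply ContinuousOn.intervalIntegrable
      rw [huIcc]
      exact ContinuousOn.mul ((continuous_const.sub continuous_id).pow (k + 1)).continuousOn hcF'
    have hint2 : IntervalIntegrable (fun s => ((k:ℝ) + 1) * ((1 - s) ^ k * F s)) volume t 1 := by
      apply ContinuousOn.intervalIntegrable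
      rw [huIcc]
      exact continuousOn_const.mul
        (ContinuousOn.mul ((continuous_const.sub continuous_id).pow k).continuousOn hcF)
    have hintphi' : IntervalIntegrable
        (fun s => (1 - s) ^ (k + 1) * F' s - ((k:ℝ) + 1) * ((1 - s) ^ k * F s)) volume t 1 :=
      hint1.sub hint2
    have hFTC := intervalIntegral.integral_eq_sub_of_hasDeriv_right_of_le h1t hcontphi hphi hintphi'
    rw [intervalIntegral.integral_sub hint1 hint2, intervalIntegral.integral_const_mul] at hFTC
    have h5 : ((1:ℝ) - 1) ^ (k + 1) * F 1 = 0 := by norm_num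
    rw [h5] at hFTC
    linarith [hFTC]
  -- the derivative of Ghat k is Ghat (k+1) on [0,1)
  have hstep : ∀ k, k + 1 ≤ m → ∀ t ∈ Set.Ico (0:ℝ) 1,
      HasDerivAt (Ghat k) (Ghat (k + 1) t) t := by
    intro k hk t ht
    have hne : (1:ℝ) - t ≠ 0 := sub_ne_zero.mpr (ne_of_gt ht.2)
    have h1 := hQ k (Nat.le_of_succ_le hk) t ht.2
    have hval : Ghat (k + 1) t
        = (-((1 - t) ^ k * H k t) * (1 - t) ^ (k + 1) -
            (∫ s in t..1, (1 - s) ^ k * H k s) * -(((k:ℝ) + 1) * (1 - t) ^ k)) /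
              ((1 - t) ^ (k + 1)) ^ 2 := by
      show (∫ s in t..1, (1 - s) ^ (k + 1) * H (k + 1) s) / (1 - t) ^ (k + 1 + 1) = _
      rw [hIBP k hk t ht]
      field_simp
      ring
    rw [← hval] at h1
    exact h1
  -- main formula by induction
  have hmain : ∀ k, k ≤ m → ∀ t ∈ Set.Ico (0:ℝ) 1,
      iteratedDerivWithin k g (Set.Ico 0 1) t = Ghat k t := by
    intro k
    induction k with
    | zero =>
      intro hk t ht
      rw [iteratedDerivWithin_zero, hg t]
      show _ = (∫ s in t..1, (1 - s) ^ 0 * H 0 s) / (1 - t) ^ (0 + 1)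
      have e0 : (∫ s in t..1, (1 - s) ^ 0 * H 0 s) = ∫ u in t..1, f u := by
        refine intervalIntegral.integral_congr fun s hs => ?_
        have hsI : s ∈ Set.Icc (0:ℝ) 1 :=
          (Set.Icc_subset_Icc ht.1 le_rfl) ((Set.uIcc_of_le (le_of_lt ht.2)) ▸ hs)
        rw [pow_zero, one_mul, ← hHe 0 hsI, iteratedDerivWithin_zero]
      rw [e0, pow_one]
    | succ k ih =>
      intro hk t ht
      have hk' : k ≤ m := Nat.le_of_succ_le hk
      rw [iteratedDerivWithin_succ]
      rw [derivWithin_congr (fun u hu => ih hk' u hu) (ih hk' t ht)]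
      exact ((hstep k hk t ht).hasDerivWithinAt).derivWithin (hSu t ht)
  refine ⟨?_, ?_⟩
  · have hcd : ContDiffOn ℝ ((m : ℕ∞) : ℕ∞) g (Set.Ico 0 1) := by
      apply contDiffOn_of_differentiableOn_deriv
      intro k hk
      have hk' : k ≤ m := by exact_mod_cast hk
      intro t ht
      have hd : DifferentiableAt ℝ (Ghat k) t := (hQ k hk' t ht.2).differentiableAt
      exact hd.differentiableWithinAt.congr (fun u hu => hmain k hk' u hu) (hmain k hk' t ht)
    exact_mod_cast hcd
  · intro k hk t ht
    rw [hmain k hk t ht]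
    exact (hRG k hk t ht).symm
end

section
/- Let f : [0,1] → ℝ be such that f, f', f'' exist and are continuous on [0,1], and f''(t) > 0 for all t ∈ [0,1). Define g(t) = (∫_t^1 f(u) du)/(1−t) for t ∈ [0,1). Then g is twice continuously differentiable on [0,1), and g''(t) > 0 for all t ∈ [0,1). -/
set_option autoImplicit false

open MeasureTheory intervalIntegral Filter Topology

/-- if `f, f', f''` exist and are continuous on `[0,1]` and `f'' > 0` on
`[0,1)`, then `g(t) = (∫_t^1 f)/(1-t)` is twice continuously differentiable on `[0,1)` with
`g'' > 0` on `[0,1)`. -/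
theorem statement15
    (f f' f'' : ℝ → ℝ)
    (hd1 : ∀ t ∈ Set.Icc (0 : ℝ) 1, HasDerivWithinAt f (f' t) (Set.Icc 0 1) t)
    (hd2 : ∀ t ∈ Set.Icc (0 : ℝ) 1, HasDerivWithinAt f' (f'' t) (Set.Icc 0 1) t)
    (hc0 : ContinuousOn f (Set.Icc 0 1))
    (hc1 : ContinuousOn f' (Set.Icc 0 1))
    (hc2 : ContinuousOn f'' (Set.Icc 0 1))
    (hpos : ∀ t ∈ Set.Ico (0 : ℝ) 1, 0 < f'' t)
    (g : ℝ → ℝ)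
    (hg : ∀ t, g t = (∫ u in t..(1 : ℝ), f u) / (1 - t)) :
    ContDiffOn ℝ 2 g (Set.Ico 0 1) ∧
    ∀ t ∈ Set.Ico (0 : ℝ) 1, 0 < iteratedDerivWithin 2 g (Set.Ico 0 1) t := by
  have hsubI : Set.Ico (0:ℝ) 1 ⊆ Set.Icc 0 1 := Set.Ico_subset_Icc_self
  have usI : UniqueDiffOn ℝ (Set.Icc (0:ℝ) 1) := uniqueDiffOn_Icc one_pos
  have us : UniqueDiffOn ℝ (Set.Ico (0:ℝ) 1) := uniqueDiffOn_Ico 0 1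
  have hint : ∀ t ∈ Set.Icc (0:ℝ) 1, IntervalIntegrable f volume t 1 := by
    intro t ht
    apply (hc0.mono ?_).intervalIntegrable
    rw [Set.uIcc_of_le ht.2]
    exact Set.Icc_subset_Icc ht.1 le_rfl
  set F : ℝ → ℝ := fun t => ∫ u in t..(1:ℝ), f u with hFdef
  -- derivative of F within Ico 0 1
  have hF' : ∀ t ∈ Set.Ico (0:ℝ) 1, HasDerivWithinAt F (-f t) (Set.Ico 0 1) t := by
    intro t ht
    rcases eq_or_lt_of_le ht.1 with h0 | h0
    · have hmem : Set.Icc (0:ℝ) 1 ∈ 𝓝[Set.Ioi (0:ℝ)] (0:ℝ) := by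
        apply mem_nhdsWithin.2 ⟨Set.Iio 1, isOpen_Iio, one_pos, ?_⟩
        intro x hx
        exact ⟨le_of_lt hx.2, le_of_lt hx.1⟩
      have hmeas : StronglyMeasurableAtFilter f (𝓝[Set.Ioi (0:ℝ)] 0) :=
        ⟨Set.Icc 0 1, hmem, hc0.aestronglyMeasurable measurableSet_Icc⟩
      have hcw : ContinuousWithinAt f (Set.Ioi (0:ℝ)) 0 :=
        (hc0 0 ⟨le_rfl, one_pos.le⟩).mono_of_mem_nhdsWithin hmem
      have h := intervalIntegral.integral_hasDerivWithinAt_left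
        (hint 0 ⟨le_rfl, one_pos.le⟩) (s := Set.Ici (0:ℝ)) hmeas hcw
      rw [← h0]
      exact h.mono Set.Ico_subset_Ici_self
    · have hmem : Set.Ioo (0:ℝ) 1 ∈ 𝓝 t := Ioo_mem_nhds h0 ht.2
      have hCA : ContinuousAt f t :=
        hc0.continuousAt (Filter.mem_of_superset hmem Set.Ioo_subset_Icc_self)
      have hmeas : StronglyMeasurableAtFilter f (𝓝 t) :=
        ⟨Set.Ioo 0 1, hmem,
          (hc0.mono Set.Ioo_subset_Icc_self).aestronglyMeasurable measurableSet_Ioo⟩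
      exact (intervalIntegral.integral_hasDerivAt_left (hint t (hsubI ht)) hmeas
        hCA).hasDerivWithinAt
  have hne : ∀ t ∈ Set.Ico (0:ℝ) 1, (1:ℝ) - t ≠ 0 := by
    intro t ht
    have : (0:ℝ) < 1 - t := by linarith [ht.2]
    exact ne_of_gt this
  -- C² smoothness of f on Icc
  have hdWf : Set.EqOn (derivWithin f (Set.Icc 0 1)) f' (Set.Icc 0 1) :=
    fun t ht => (hd1 t ht).derivWithin (usI t ht)
  have hdWf' : Set.EqOn (derivWithin f' (Set.Icc 0 1)) f'' (Set.Icc 0 1) :=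
    fun t ht => (hd2 t ht).derivWithin (usI t ht)
  have hf'C1 : ContDiffOn ℝ 1 f' (Set.Icc 0 1) := by
    have h1 : (1 : WithTop ℕ∞) = 0 + 1 := by norm_num
    rw [h1, contDiffOn_succ_iff_derivWithin usI]
    refine ⟨fun t ht => ((hd2 t ht).differentiableWithinAt), by simp, ?_⟩
    rw [contDiffOn_zero]
    exact hc2.congr hdWf'
  have hfC2 : ContDiffOn ℝ 2 f (Set.Icc 0 1) := by
    have h1 : (2 : WithTop ℕ∞) = 1 + 1 := by norm_num
    rw [h1, contDiffOn_succ_iff_derivWithin usI]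
    refine ⟨fun t ht => ((hd1 t ht).differentiableWithinAt), by simp, ?_⟩
    exact hf'C1.congr fun x hx => hdWf hx
  -- C² smoothness of F on Ico
  have hFC : ContDiffOn ℝ 2 F (Set.Ico 0 1) := by
    have h1 : (2 : WithTop ℕ∞) = 1 + 1 := by norm_num
    rw [h1, contDiffOn_succ_iff_derivWithin us]
    refine ⟨fun t ht => (hF' t ht).differentiableWithinAt, by simp, ?_⟩
    have hEq : Set.EqOn (derivWithin F (Set.Ico 0 1)) (fun t => -f t) (Set.Ico 0 1) :=
      fun t ht => (hF' t ht).derivWithin (us t ht)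
    exact (((hfC2.of_le (by norm_num)).mono hsubI).neg).congr fun x hx => hEq hx
  have hgF : g = fun t => F t / (1 - t) := funext hg
  have hgC : ContDiffOn ℝ 2 g (Set.Ico 0 1) := by
    rw [hgF]
    exact hFC.div ((contDiff_const.sub contDiff_id).contDiffOn) hne
  refine ⟨hgC, ?_⟩
  -- explicit second derivative
  set g₁ : ℝ → ℝ := fun t => (F t - (1 - t) * f t) / (1 - t)^2 with hg1def
  set g₂ : ℝ → ℝ := fun t =>
    (2 * F t - 2 * (1 - t) * f t - (1 - t)^2 * f' t) / (1 - t)^3 with hg2def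
  have h1t : ∀ t : ℝ, HasDerivWithinAt (fun u : ℝ => 1 - u) (-1) (Set.Ico (0:ℝ) 1) t := by
    intro t
    simpa [Pi.sub_def] using (hasDerivWithinAt_const t (Set.Ico (0:ℝ) 1) (1:ℝ)).sub
      (hasDerivWithinAt_id t (Set.Ico (0:ℝ) 1))
  have hfd : ∀ t ∈ Set.Ico (0:ℝ) 1, HasDerivWithinAt f (f' t) (Set.Ico 0 1) t :=
    fun t ht => (hd1 t (hsubI ht)).mono hsubI
  have hg'1 : ∀ t ∈ Set.Ico (0:ℝ) 1, HasDerivWithinAt g (g₁ t) (Set.Ico 0 1) t := by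
    intro t ht
    rw [hgF]
    have h := (hF' t ht).div (h1t t) (hne t ht)
    refine h.congr_deriv ?_
    rw [hg1def]
    field_simp
    ring
  have hg'2 : ∀ t ∈ Set.Ico (0:ℝ) 1, HasDerivWithinAt g₁ (g₂ t) (Set.Ico 0 1) t := by
    intro t ht
    have hnum : HasDerivWithinAt (fun u => F u - (1 - u) * f u)
        (-f t - ((-1) * f t + (1 - t) * f' t)) (Set.Ico 0 1) t :=
      (hF' t ht).sub ((h1t t).mul (hfd t ht))
    have hden : HasDerivWithinAt (fun u : ℝ => (1 - u)^2)
        ((2 : ℕ) * (1 - t) ^ (2 - 1) * (-1)) (Set.Ico 0 1) t := (h1t t).pow 2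
    have h := hnum.div hden (pow_ne_zero 2 (hne t ht))
    refine h.congr_deriv ?_
    rw [hg2def]
    have h1 : (1:ℝ) - t ≠ 0 := hne t ht
    field_simp
    ring
  have hEqg1 : Set.EqOn (derivWithin g (Set.Ico 0 1)) g₁ (Set.Ico 0 1) :=
    fun t ht => (hg'1 t ht).derivWithin (us t ht)
  intro t ht
  have hiter : iteratedDerivWithin 2 g (Set.Ico 0 1) t = g₂ t := by
    have h2 : iteratedDerivWithin 2 g (Set.Ico 0 1) t
        = derivWithin (derivWithin g (Set.Ico 0 1)) (Set.Ico 0 1) t := by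
      rw [show (2:ℕ) = 1 + 1 from rfl, iteratedDerivWithin_succ]
      have hE : Set.EqOn (iteratedDerivWithin 1 g (Set.Ico 0 1))
          (derivWithin g (Set.Ico 0 1)) (Set.Ico 0 1) :=
        fun x hx => congrFun iteratedDerivWithin_one x
      exact derivWithin_congr hE (hE ht)
    rw [h2, derivWithin_congr hEqg1 (hEqg1 ht)]
    exact (hg'2 t ht).derivWithin (us t ht)
  rw [hiter]
  -- positivity
  have hf'mono : StrictMonoOn f' (Set.Icc 0 1) := by
    apply strictMonoOn_of_deriv_pos (convex_Icc 0 1) hc1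
    intro x hx
    rw [interior_Icc] at hx
    have hD : HasDerivAt f' (f'' x) x :=
      (hd2 x (Set.Ioo_subset_Icc_self hx)).hasDerivAt (Icc_mem_nhds hx.1 hx.2)
    rw [hD.deriv]
    exact hpos x ⟨hx.1.le, hx.2⟩
  set φ : ℝ → ℝ := fun u => f u - f t - f' t * (u - t) with hφdef
  have hsub' : Set.Icc t 1 ⊆ Set.Icc (0:ℝ) 1 := Set.Icc_subset_Icc ht.1 le_rfl
  have hφcont : ContinuousOn φ (Set.Icc t 1) :=
    ((hc0.mono hsub').sub continuousOn_const).sub (continuousOn_const.mul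
      (continuousOn_id.sub continuousOn_const))
  have hφmono : StrictMonoOn φ (Set.Icc t 1) := by
    apply strictMonoOn_of_deriv_pos (convex_Icc t 1) hφcont
    intro x hx
    rw [interior_Icc] at hx
    have hx01 : x ∈ Set.Ioo (0:ℝ) 1 := ⟨lt_of_le_of_lt ht.1 hx.1, hx.2⟩
    have hD : HasDerivAt f (f' x) x :=
      (hd1 x (Set.Ioo_subset_Icc_self hx01)).hasDerivAt (Icc_mem_nhds hx01.1 hx01.2)
    have hDφ : HasDerivAt φ (f' x - f' t) x := by
      have := (hD.sub_const (f t)).sub ((hasDerivAt_id x).sub_const t |>.const_mul (f' t))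
      simpa [hφdef, Pi.sub_def] using this
    rw [hDφ.deriv]
    have := hf'mono (hsubI ht) (Set.Ioo_subset_Icc_self hx01) hx.1
    linarith
  have hφpos : ∀ u ∈ Set.Ioo t 1, 0 < φ u := by
    intro u hu
    have := hφmono ⟨le_rfl, ht.2.le⟩ ⟨hu.1.le, hu.2.le⟩ hu.1
    have hφt : φ t = 0 := by simp [hφdef]
    linarith
  have hφint : IntervalIntegrable φ volume t 1 := by
    apply hφcont.intervalIntegrable_of_Icc ht.2.le
  have hintpos : 0 < ∫ u in t..(1:ℝ), φ u :=
    intervalIntegral_pos_of_pos_on hφint hφpos ht.2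
  have hval : (∫ u in t..(1:ℝ), φ u)
      = F t - f t * (1 - t) - f' t * ((1 - t)^2 / 2) := by
    have hi1 : IntervalIntegrable f volume t 1 := hint t (hsubI ht)
    have hc' : Continuous fun u : ℝ => f' t * (u - t) := by fun_prop
    have hi2 : IntervalIntegrable (fun u => f t + f' t * (u - t)) volume t 1 :=
      (continuous_const.add hc').intervalIntegrable t 1
    have hφeq : φ = fun u => f u - (f t + f' t * (u - t)) := by
      funext u; rw [hφdef]; ring
    rw [hφeq, intervalIntegral.integral_sub hi1 hi2]
    have hlin : (∫ u in t..(1:ℝ), (f t + f' t * (u - t)))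
        = f t * (1 - t) + f' t * ((1 - t)^2 / 2) := by
      rw [intervalIntegral.integral_add
        (continuous_const.intervalIntegrable t 1) (hc'.intervalIntegrable t 1)]
      rw [intervalIntegral.integral_const, intervalIntegral.integral_const_mul]
      have : (∫ u in t..(1:ℝ), (u - t)) = (1 - t)^2 / 2 := by
        rw [intervalIntegral.integral_comp_sub_right (fun u => u) t]
        simp [integral_id]
      rw [this]
      simp [smul_eq_mul]
      ring
    rw [hlin]
    rw [hFdef]
    ring
  have hK : 0 < 2 * F t - 2 * (1 - t) * f t - (1 - t)^2 * f' t := by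
    rw [hval] at hintpos
    nlinarith [hintpos]
  rw [hg2def]
  have hd3 : (0:ℝ) < (1 - t)^3 := by
    have : (0:ℝ) < 1 - t := by linarith [ht.2]
    positivity
  exact div_pos hK hd3
end

section
/- Fix q ∈ (0,1), δ > 0, and grid points λ_j = q + jδ for j ∈ [(1−q)/δ]. The rule λ̂ = inf{λ_j : π̂₀^{λ_{j−1}} ≤ π̂₀^{λ_j}} is a stopping time with respect to the filtration G_t: for every j, the event {λ̂ = λ_j} is G_{λ_j}-measurable; the same holds for the robust rule λ̂' = inf{λ_j : ℓ(λ_{j−1}) ≤ ℓ(λ_j)} with ℓ(λ) = π̂₀^λ + √(V̂^λ), V̂^λ = (1/n)·π̂₀^λ·(1/(1−λ) − π̂₀^λ). -/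
set_option autoImplicit false

open MeasureTheory

attribute [local instance] Classical.propDecidable

/-- Number of p-values that are at least `s`. -/
noncomputable def hiCount {Ω : Type*} (n : ℕ) (p : Fin n → Ω → ℝ) (s : ℝ) (ω : Ω) : ℕ :=
  (Finset.univ.filter fun i => s ≤ p i ω).card

/-- Storey's null proportion estimator `π̂₀^λ = (1 + Σ 1{p_i ≥ λ}) / (n(1-λ))`. -/
noncomputable def storeyPi0 {Ω : Type*} (n : ℕ) (p : Fin n → Ω → ℝ) (lam : ℝ) (ω : Ω) : ℝ :=
  (1 + (hiCount n p lam ω : ℝ)) / (n * (1 - lam))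

/-- The filtration `G_t = σ(Σ 1{p_i ≥ s} : q ≤ s ≤ t)`. -/
noncomputable def storeyFilt {Ω : Type*} (n : ℕ) (p : Fin n → Ω → ℝ) (q t : ℝ) :
    MeasurableSpace Ω :=
  ⨆ s ∈ Set.Icc q t, MeasurableSpace.comap (fun ω => hiCount n p s ω) ⊤

/-- The estimated variance `V̂^λ = (1/n)·π̂₀^λ·(1/(1-λ) - π̂₀^λ)` and the loss
`ℓ(λ) = π̂₀^λ + √(V̂^λ)`. -/
noncomputable def storeyLoss {Ω : Type*} (n : ℕ) (p : Fin n → Ω → ℝ) (lam : ℝ) (ω : Ω) : ℝ :=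
  storeyPi0 n p lam ω +
    Real.sqrt ((1 / (n : ℝ)) * storeyPi0 n p lam ω * (1 / (1 - lam) - storeyPi0 n p lam ω))

/-- The stopping rule `λ̂ = inf{λ_j : π̂₀^{λ_{j-1}} ≤ π̂₀^{λ_j}}` on the grid
`λ_j = q + jδ`, `j ∈ [(1-q)/δ]` (stopping at the last grid point if the rule never
triggers). -/
noncomputable def gridStop {Ω : Type*} (n : ℕ) (p : Fin n → Ω → ℝ) (q δ : ℝ) (ω : Ω) : ℝ :=
  sInf ({x : ℝ | ∃ j : ℕ, 1 ≤ j ∧ j ≤ ⌊(1 - q) / δ⌋₊ ∧ x = q + j * δ ∧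
      storeyPi0 n p (q + ((j : ℝ) - 1) * δ) ω ≤ storeyPi0 n p (q + j * δ) ω} ∪
    {q + (⌊(1 - q) / δ⌋₊ : ℝ) * δ})

/-- The robust stopping rule `λ̂' = inf{λ_j : ℓ(λ_{j-1}) ≤ ℓ(λ_j)}`. -/
noncomputable def gridStop' {Ω : Type*} (n : ℕ) (p : Fin n → Ω → ℝ) (q δ : ℝ) (ω : Ω) : ℝ :=
  sInf ({x : ℝ | ∃ j : ℕ, 1 ≤ j ∧ j ≤ ⌊(1 - q) / δ⌋₊ ∧ x = q + j * δ ∧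
      storeyLoss n p (q + ((j : ℝ) - 1) * δ) ω ≤ storeyLoss n p (q + j * δ) ω} ∪
    {q + (⌊(1 - q) / δ⌋₊ : ℝ) * δ})


lemma grid_inj {q δ : ℝ} (hδ : 0 < δ) {j k : ℕ} (h : q + (j : ℝ) * δ = q + (k : ℝ) * δ) :
    j = k := by
  have h2 : (j : ℝ) = k := mul_right_cancel₀ (ne_of_gt hδ) (by linarith)
  exact_mod_cast h2

lemma aux_meas {Ω : Type*} (M : MeasurableSpace Ω) (q δ : ℝ) (hδ : 0 < δ)
    (cond : ℕ → Ω → Prop) (J j : ℕ) (h1 : 1 ≤ j) (hJ : j ≤ J)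
    (hcond : ∀ k, 1 ≤ k → k ≤ j → MeasurableSet[M] {ω | cond k ω}) :
    MeasurableSet[M] {ω | sInf ({x : ℝ | ∃ k : ℕ, 1 ≤ k ∧ k ≤ J ∧ x = q + k * δ ∧ cond k ω}
      ∪ {q + (J : ℝ) * δ}) = q + j * δ} := by
  have hmono : ∀ {a b : ℕ}, a ≤ b → q + (a : ℝ) * δ ≤ q + (b : ℝ) * δ := by
    intro a b hab
    have : (a : ℝ) ≤ b := Nat.cast_le.mpr hab
    nlinarith
  have key : ∀ ω : Ω, (sInf ({x : ℝ | ∃ k : ℕ, 1 ≤ k ∧ k ≤ J ∧ x = q + k * δ ∧ cond k ω}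
      ∪ {q + (J : ℝ) * δ}) = q + j * δ) ↔
      ((cond j ω ∨ j = J) ∧ ∀ k, 1 ≤ k → k < j → ¬ cond k ω) := by
    intro ω
    set A := ({x : ℝ | ∃ k : ℕ, 1 ≤ k ∧ k ≤ J ∧ x = q + k * δ ∧ cond k ω}
      ∪ {q + (J : ℝ) * δ}) with hA
    have hAne : A.Nonempty := ⟨q + J * δ, Or.inr rfl⟩
    have hAfin : A.Finite := by
      apply Set.Finite.subset (Set.Finite.union
        (Set.Finite.image (fun k : ℕ => q + (k : ℝ) * δ) (Set.finite_Icc 1 J))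
        (Set.finite_singleton (q + (J : ℝ) * δ)))
      rintro x (⟨k, hk1, hk2, rfl, _⟩ | rfl)
      · exact Or.inl ⟨k, ⟨hk1, hk2⟩, rfl⟩
      · exact Or.inr rfl
    constructor
    · intro h
      have hmem : q + (j : ℝ) * δ ∈ A := h ▸ hAne.csInf_mem hAfin
      have hlb : ∀ x ∈ A, q + (j : ℝ) * δ ≤ x := fun x hx => h ▸ csInf_le hAfin.bddBelow hx
      constructor
      · rcases hmem with ⟨k, hk1, hk2, hkeq, hkc⟩ | heq
        · have := grid_inj hδ hkeq; subst this; exact Or.inl hkc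
        · exact Or.inr (grid_inj hδ heq)
      · intro k hk1 hkj hc
        have h2 : q + (j : ℝ) * δ ≤ q + (k : ℝ) * δ :=
          hlb _ (Or.inl ⟨k, hk1, le_trans (le_of_lt hkj) hJ, rfl, hc⟩)
        have h3 : (j : ℝ) ≤ k := by nlinarith
        exact absurd (Nat.cast_le.mp h3) (not_le.mpr hkj)
    · rintro ⟨hj, hlow⟩
      have hmem : q + (j : ℝ) * δ ∈ A := by
        rcases hj with hc | rfl
        · exact Or.inl ⟨j, h1, hJ, rfl, hc⟩
        · exact Or.inr rfl
      refine le_antisymm (csInf_le hAfin.bddBelow hmem) (le_csInf hAne ?_)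
      rintro x (⟨k, hk1, hk2, rfl, hkc⟩ | rfl)
      · have hjk : j ≤ k := by
          by_contra hlt
          exact hlow k hk1 (not_le.mp hlt) hkc
        exact hmono hjk
      · exact hmono hJ
  have hset : {ω : Ω | sInf ({x : ℝ | ∃ k : ℕ, 1 ≤ k ∧ k ≤ J ∧ x = q + k * δ ∧ cond k ω}
      ∪ {q + (J : ℝ) * δ}) = q + j * δ} =
      ({ω : Ω | cond j ω} ∪ {ω : Ω | j = J}) ∩
        ⋂ (k : ℕ), ⋂ (_ : 1 ≤ k ∧ k < j), {ω : Ω | cond k ω}ᶜ := by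
    ext ω
    simp only [Set.mem_setOf_eq, key ω, Set.mem_inter_iff, Set.mem_union, Set.mem_iInter,
      Set.mem_compl_iff]
    tauto
  rw [hset]
  refine MeasurableSet.inter (MeasurableSet.union (hcond j h1 le_rfl) ?_)
    (MeasurableSet.iInter fun k => MeasurableSet.iInter fun hk =>
      (hcond k hk.1 hk.2.le).compl)
  by_cases h : j = J <;> simp [h]

lemma hiCount_meas_filt {Ω : Type*} (n : ℕ) (p : Fin n → Ω → ℝ) (q t s : ℝ)
    (hs : s ∈ Set.Icc q t) :
    Measurable[storeyFilt n p q t] (fun ω => hiCount n p s ω) := by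
  have h1 : MeasurableSpace.comap (fun ω => hiCount n p s ω) ⊤ ≤ storeyFilt n p q t :=
    le_iSup₂ (f := fun (s : ℝ) (_ : s ∈ Set.Icc q t) =>
      MeasurableSpace.comap (fun ω => hiCount n p s ω) ⊤) s hs
  exact fun u _ => h1 _ ⟨u, trivial, rfl⟩

lemma comp_meas_filt {Ω : Type*} (n : ℕ) (p : Fin n → Ω → ℝ) (q t s : ℝ)
    (hs : s ∈ Set.Icc q t) (F : ℕ → ℝ) :
    Measurable[storeyFilt n p q t] (fun ω => F (hiCount n p s ω)) :=
  measurable_from_top.comp (hiCount_meas_filt n p q t s hs)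

lemma pi0_meas_filt {Ω : Type*} (n : ℕ) (p : Fin n → Ω → ℝ) (q t s : ℝ)
    (hs : s ∈ Set.Icc q t) :
    Measurable[storeyFilt n p q t] (storeyPi0 n p s) :=
  comp_meas_filt n p q t s hs (fun m => (1 + (m : ℝ)) / (n * (1 - s)))

lemma loss_meas_filt {Ω : Type*} (n : ℕ) (p : Fin n → Ω → ℝ) (q t s : ℝ)
    (hs : s ∈ Set.Icc q t) :
    Measurable[storeyFilt n p q t] (storeyLoss n p s) :=
  comp_meas_filt n p q t s hs (fun m =>
    (1 + (m : ℝ)) / (n * (1 - s)) +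
      Real.sqrt ((1 / (n : ℝ)) * ((1 + (m : ℝ)) / (n * (1 - s))) *
        (1 / (1 - s) - (1 + (m : ℝ)) / (n * (1 - s)))))

/-- the rules `λ̂` and `λ̂'` are stopping times with respect to the
filtration `G_t`: for every grid index `j`, the events `{λ̂ = λ_j}` and `{λ̂' = λ_j}` are
`G_{λ_j}`-measurable. -/
theorem statement18
    {Ω : Type*} [MeasurableSpace Ω]
    (n : ℕ) (p : Fin n → Ω → ℝ) (hmeas : ∀ i, Measurable (p i))
    (q : ℝ) (hq : q ∈ Set.Ioo (0 : ℝ) 1) (δ : ℝ) (hδ : 0 < δ) :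
    ∀ j : ℕ, 1 ≤ j → j ≤ ⌊(1 - q) / δ⌋₊ →
      MeasurableSet[storeyFilt n p q (q + j * δ)] {ω | gridStop n p q δ ω = q + j * δ} ∧
      MeasurableSet[storeyFilt n p q (q + j * δ)] {ω | gridStop' n p q δ ω = q + j * δ} := by

  intro j hj1 hjJ
  set J := ⌊(1 - q) / δ⌋₊ with hJdef
  have hgrid : ∀ k : ℕ, 1 ≤ k → k ≤ j →
      (q + ((k : ℝ) - 1) * δ ∈ Set.Icc q (q + (j : ℝ) * δ)) ∧
      (q + (k : ℝ) * δ ∈ Set.Icc q (q + (j : ℝ) * δ)) := by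
    intro k hk1 hkj
    have hk1' : (1 : ℝ) ≤ k := by exact_mod_cast hk1
    have hkj' : (k : ℝ) ≤ j := by exact_mod_cast hkj
    constructor
    · constructor <;> nlinarith
    · constructor <;> nlinarith
  constructor
  · exact aux_meas (storeyFilt n p q (q + j * δ)) q δ hδ
      (fun k ω => storeyPi0 n p (q + ((k : ℝ) - 1) * δ) ω ≤ storeyPi0 n p (q + k * δ) ω)
      J j hj1 hjJ (fun k hk1 hkj =>
        measurableSet_le (pi0_meas_filt n p q (q + j * δ) _ (hgrid k hk1 hkj).1)
          (pi0_meas_filt n p q (q + j * δ) _ (hgrid k hk1 hkj).2))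
  · exact aux_meas (storeyFilt n p q (q + j * δ)) q δ hδ
      (fun k ω => storeyLoss n p (q + ((k : ℝ) - 1) * δ) ω ≤ storeyLoss n p (q + k * δ) ω)
      J j hj1 hjJ (fun k hk1 hkj =>
        measurableSet_le (loss_meas_filt n p q (q + j * δ) _ (hgrid k hk1 hkj).1)
          (loss_meas_filt n p q (q + j * δ) _ (hgrid k hk1 hkj).2))
end
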